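/- arXiv:1703.04076 — 6 statements merged into one kernel-verified Lean document; each statement's English description precedes it below -/
import Mathlib

section
/- If an element x of the Weyl algebra A is solvable, then x is nilpotent, i.e., N(x) ≠ C(x). (Corollary 3.1) -/
open scoped BigOperators

/-- Defining relation of the Weyl algebra: `p * q = q * p + 1`. -/
inductive WeylRel (F : Type*) [CommRing F] :
    FreeAlgebra F (Fin 2) → FreeAlgebra F (Fin 2) → Prop
  | comm : WeylRel F (FreeAlgebra.ι F 0 * FreeAlgebra.ι F 1)
      (FreeAlgebra.ι F 1 * FreeAlgebra.ι F 0 + 1)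

/-- The Weyl algebra over `F`. -/
abbrev WeylAlgebra (F : Type*) [CommRing F] := RingQuot (WeylRel F)

variable (F : Type*) [Field F] [CharZero F]

/-- The generator `p` of the Weyl algebra. -/
noncomputable def Wp : WeylAlgebra F :=
  RingQuot.mkAlgHom F (WeylRel F) (FreeAlgebra.ι F 0)

/-- The generator `q` of the Weyl algebra. -/
noncomputable def Wq : WeylAlgebra F :=
  RingQuot.mkAlgHom F (WeylRel F) (FreeAlgebra.ι F 1)

/-- `x` is solvable if `[x, y] = 1` for some `y`. -/
def Solvable (x : WeylAlgebra F) : Prop := ∃ y : WeylAlgebra F, x * y - y * x = 1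

/-- The centralizer `C(x)`. -/
def Cset (x : WeylAlgebra F) : Set (WeylAlgebra F) := {y | x * y - y * x = 0}

/-- `N(x) = {y | (ad x)^n y = 0 for some n ≥ 1}`. -/
def Nset (x : WeylAlgebra F) : Set (WeylAlgebra F) :=
  {y | ∃ n : ℕ, 1 ≤ n ∧ (fun z => x * z - z * x)^[n] y = 0}

/-- `D(x) = {y | [x,y] = λ y for some scalar λ}`. -/
def Dset (x : WeylAlgebra F) : Set (WeylAlgebra F) :=
  {y | ∃ c : F, x * y - y * x = c • y}

def Delta1 : Set (WeylAlgebra F) :=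
  {x | x ∉ Set.range (algebraMap F (WeylAlgebra F)) ∧
    Nset F x = Set.univ ∧ Dset F x = Cset F x}

def Delta2 : Set (WeylAlgebra F) :=
  {x | x ∉ Set.range (algebraMap F (WeylAlgebra F)) ∧
    Nset F x ≠ Set.univ ∧ Nset F x ≠ Cset F x ∧ Dset F x = Cset F x}

/-- The graded component `A_s = {a | [pq, a] = s • a}`. -/
def Wgrade (s : ℤ) : Set (WeylAlgebra F) :=
  {a | (Wp F * Wq F) * a - a * (Wp F * Wq F) = s • a}

/-- The monomial `p^i q^j`. -/
noncomputable def Wmono (i j : ℕ) : WeylAlgebra F := Wp F ^ i * Wq F ^ j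

/-- `α` is the coordinate family of `x` in the basis `p^i q^j`. -/
def Represents (α : (ℕ × ℕ) →₀ F) (x : WeylAlgebra F) : Prop :=
  x = α.sum fun ij c => c • Wmono F ij.1 ij.2

/-- `v_{ρ,σ}(x) = max { iρ + jσ | (i,j) ∈ E(x) }`. -/
def vdeg (α : (ℕ × ℕ) →₀ F) (ρ σ : ℕ) : ℕ :=
  α.support.sup fun ij => ij.1 * ρ + ij.2 * σ

/-- `E_{ρ,σ}(x)`. -/
def Eset (α : (ℕ × ℕ) →₀ F) (ρ σ : ℕ) : Finset (ℕ × ℕ) :=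
  α.support.filter fun ij => ij.1 * ρ + ij.2 * σ = vdeg F α ρ σ

/-- The `(ρ,σ)`-polynomial of `x`, an element of `F[X,Y]`. -/
noncomputable def wpoly (α : (ℕ × ℕ) →₀ F) (ρ σ : ℕ) : MvPolynomial (Fin 2) F :=
  ∑ ij ∈ Eset F α ρ σ,
    MvPolynomial.monomial (Finsupp.single 0 ij.1 + Finsupp.single 1 ij.2) (α ij)

/-- The `(ρ,σ)`-term of `x`, an element of the Weyl algebra. -/
noncomputable def wterm (α : (ℕ × ℕ) →₀ F) (ρ σ : ℕ) : WeylAlgebra F :=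
  ∑ ij ∈ Eset F α ρ σ, α ij • Wmono F ij.1 ij.2

/-- The standard representation of the Weyl algebra on `F[X]`. -/
noncomputable def weylRep : WeylAlgebra F →ₐ[F] Module.End F (Polynomial F) :=
  RingQuot.liftAlgHom F (s := WeylRel F)
    ⟨FreeAlgebra.lift F
      ![(Polynomial.derivative : Polynomial F →ₗ[F] Polynomial F),
        LinearMap.mulLeft F (Polynomial.X : Polynomial F)], by
      rintro a b ⟨⟩
      simp only [map_mul, map_add, map_one, FreeAlgebra.lift_ι_apply]
      refine LinearMap.ext fun f => ?_
      simp only [Module.End.mul_apply, LinearMap.mulLeft_apply, LinearMap.add_apply,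
        Module.End.one_apply, Matrix.cons_val_zero, Matrix.cons_val_one, Matrix.head_cons, Polynomial.derivative_mul, Polynomial.derivative_X, one_mul]
      ring⟩

lemma weyl_one_ne_zero : (1 : WeylAlgebra F) ≠ 0 := by
  intro h
  have h1 : weylRep F 1 = weylRep F 0 := by rw [h]
  rw [map_one, map_zero] at h1
  have := LinearMap.congr_fun h1 (1 : Polynomial F)
  simp at this

/-- Corollary 3.1: a solvable element is nilpotent, i.e. `N(x) ≠ C(x)`. -/
theorem solvable_implies_nilpotent (x : WeylAlgebra F) (hx : Solvable F x) :
    Nset F x ≠ Cset F x := by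
  obtain ⟨y, hy⟩ := hx
  intro h
  have hyN : y ∈ Nset F x := by
    refine ⟨2, one_le_two, ?_⟩
    show x * (x * y - y * x) - (x * y - y * x) * x = 0
    rw [hy]
    simp
  rw [h] at hyN
  have : x * y - y * x = 0 := hyN
  rw [hy] at this
  exact weyl_one_ne_zero F this
end

section
/- Let x ∈ A_i and y ∈ A_j with i > 0 and j < 0. If [x, y] = 0, then x = 0 or y = 0. (Lemma 3.3) -/
/-!
Let `p` act on `F[X]` as `d/dX` and `q` as multiplication by `X`. Every element is a normally
ordered sum `∑ c (a, b) • q ^ b * p ^ a`, and the representation is faithful: once `c` vanishes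
for all `a' < a`, the image of `X ^ a` has coefficient `c (a, b) * a!` at `X ^ b`. An element of
`A_s` sends `X ^ n` to `φ(n) • X ^ (n + s)`, where `φ` is a combination of descending Pochhammer
symbols.

For `x ∈ A_I` with polynomial `P` and `y ∈ A_{-M}` with polynomial `Q`, `xy = yx` evaluated on
`X ^ n` gives `Q(t) P(t - M) = P(t) Q(t + I)` at all large integers, hence as polynomials.
Comparing the coefficients just below the leading ones gives `-M deg P = I deg Q`, so `Q` is
constant; but `Q(0) = 0`, since the Pochhammer symbols in `Q` have index at least `M ≥ 1`.
-/

open scoped BigOperators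

variable (F : Type*) [Field F] [CharZero F]

open Polynomial

theorem mul_pow_succ_eq_of_mul_eq_add_one {R : Type*} [Ring R] {a b : R}
    (h : a * b = b * a + 1) (n : ℕ) :
    a * b ^ (n + 1) = b ^ (n + 1) * a + (n + 1 : ℕ) * b ^ n := by
  induction n with
  | zero => simpa using h
  | succ n ih =>
    rw [pow_succ b (n + 1), ← mul_assoc, ih, add_mul, mul_assoc _ a, h]
    push_cast
    noncomm_ring

theorem Polynomial.Monic.nextCoeff_taylor {R : Type*} [CommRing R] {f : R[X]} (hf : f.Monic)
    (r : R) : (taylor r f).nextCoeff = f.nextCoeff + f.natDegree * r := by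
  obtain hd | ⟨e, hd⟩ : f.natDegree = 0 ∨ ∃ e, f.natDegree = e + 1 :=
    (Nat.eq_zero_or_eq_succ_pred _).imp id fun h => ⟨_, h⟩
  · simp [nextCoeff, hd]
  have hlin : (hasseDeriv e f).natDegree ≤ 1 :=
    (natDegree_hasseDeriv_le f e).trans (by omega)
  rw [nextCoeff, nextCoeff, natDegree_taylor, hd, if_neg e.succ_ne_zero, if_neg e.succ_ne_zero,
    Nat.add_sub_cancel, taylor_coeff, eq_X_add_C_of_natDegree_le_one hlin]
  have hlead : f.coeff (e + 1) = 1 := hd ▸ hf.coeff_natDegree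
  simp [hasseDeriv_coeff, add_comm 1 e, hlead, Nat.choose_succ_self_right]
  ring

theorem Polynomial.Monic.taylor {R : Type*} [CommRing R] {f : R[X]} (hf : f.Monic) (r : R) :
    (taylor r f).Monic :=
  (leadingCoeff_taylor r f).trans hf

theorem Polynomial.natDegree_mul_eq_of_mul_taylor_eq {K : Type*} [Field K] {f g : K[X]}
    (hf : f ≠ 0) (hg : g ≠ 0) {r s : K} (h : g * taylor r f = f * taylor s g) :
    f.natDegree * r = g.natDegree * s := by
  set f₁ := f * C f.leadingCoeff⁻¹
  set g₁ := g * C g.leadingCoeff⁻¹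
  have hf₁ : f₁.Monic := monic_mul_leadingCoeff_inv hf
  have hg₁ : g₁.Monic := monic_mul_leadingCoeff_inv hg
  have h₁ : g₁ * taylor r f₁ = f₁ * taylor s g₁ := by
    simp only [f₁, g₁, taylor_mul, taylor_C]
    linear_combination C g.leadingCoeff⁻¹ * C f.leadingCoeff⁻¹ * h
  have hnext := congrArg nextCoeff h₁
  rw [hg₁.nextCoeff_mul (hf₁.taylor r), hf₁.nextCoeff_mul (hg₁.taylor s),
    hf₁.nextCoeff_taylor, hg₁.nextCoeff_taylor] at hnext
  rw [natDegree_mul_C (inv_ne_zero (leadingCoeff_ne_zero.mpr hf)),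
    natDegree_mul_C (inv_ne_zero (leadingCoeff_ne_zero.mpr hg))] at hnext
  linear_combination hnext

theorem Polynomial.eq_zero_of_mul_taylor_eq {K : Type*} [Field K] [CharZero K] {f g : K[X]}
    (hf : f ≠ 0) {m n : ℕ} (hn : 0 < n) (hg : g.eval 0 = 0)
    (h : g * taylor (-m : K) f = f * taylor (n : K) g) : g = 0 := by
  by_contra hg₀
  have hdeg : ((f.natDegree * m + g.natDegree * n : ℕ) : K) = 0 := by
    push_cast
    linear_combination -natDegree_mul_eq_of_mul_taylor_eq hf hg₀ h
  have hconst : g.natDegree = 0 := by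
    simpa [hn.ne'] using (Nat.add_eq_zero_iff.mp (Nat.cast_eq_zero.mp hdeg)).2
  rw [eq_C_of_natDegree_eq_zero hconst, coeff_zero_eq_eval_zero, hg, C_0] at hg₀
  exact hg₀ rfl

theorem Polynomial.coeff_X_mul_derivative {R : Type*} [Semiring R] (f : R[X]) (k : ℕ) :
    (X * derivative f).coeff k = k * f.coeff k := by
  rcases k with _ | k
  · simp
  · rw [coeff_X_mul, coeff_derivative, ← Nat.cast_succ]
    exact (Nat.cast_comm _ _).symm

theorem Polynomial.X_mul_derivative_X_pow {R : Type*} [Semiring R] (n : ℕ) :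
    X * derivative (X ^ n : R[X]) = (n : R) • X ^ n := by
  ext k
  rw [coeff_X_mul_derivative, coeff_smul, coeff_X_pow, smul_eq_mul]
  split_ifs with h <;> simp [h]

noncomputable def fockRep (R : Type*) [CommRing R] : WeylAlgebra R →ₐ[R] Module.End R R[X] :=
  RingQuot.liftAlgHom R ⟨FreeAlgebra.lift R ![derivative, LinearMap.mulLeft R X], by
    rintro _ _ ⟨⟩
    refine LinearMap.ext fun f => ?_
    simp [derivative_mul, add_comm]⟩

section NormalOrdering

variable (K : Type*) [Field K]

@[simp]
theorem fockRep_Wp : fockRep K (Wp K) = derivative := by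
  simp [fockRep, Wp]

@[simp]
theorem fockRep_Wq : fockRep K (Wq K) = LinearMap.mulLeft K X := by
  simp [fockRep, Wq]

theorem fockRep_Wq_pow_mul_Wp_pow_X_pow (a b n : ℕ) :
    fockRep K (Wq K ^ b * Wp K ^ a) (X ^ n) = (n.descFactorial a : K) • X ^ (n - a + b) := by
  simp [Module.End.pow_apply, iterate_derivative_X_pow_eq_smul, LinearMap.pow_mulLeft, pow_add,
    mul_comm]

theorem Wp_mul_Wq : Wp K * Wq K = Wq K * Wp K + 1 := by
  simpa only [Wp, Wq, map_mul, map_add, map_one] using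
    RingQuot.mkAlgHom_rel K (WeylRel.comm (F := K))

noncomputable def normalOrdered : ((ℕ × ℕ) →₀ K) →ₗ[K] WeylAlgebra K :=
  Finsupp.linearCombination K fun ab => Wq K ^ ab.2 * Wp K ^ ab.1

theorem Wq_pow_mul_Wp_pow_mem_range_normalOrdered (a b : ℕ) :
    Wq K ^ b * Wp K ^ a ∈ LinearMap.range (normalOrdered K) :=
  ⟨Finsupp.single (a, b) 1, by simp [normalOrdered]⟩

variable {K}

theorem mul_mem_range_normalOrdered {w u : WeylAlgebra K}
    (hw : ∀ a b : ℕ, w * (Wq K ^ b * Wp K ^ a) ∈ LinearMap.range (normalOrdered K))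
    (hu : u ∈ LinearMap.range (normalOrdered K)) :
    w * u ∈ LinearMap.range (normalOrdered K) := by
  obtain ⟨c, rfl⟩ := hu
  rw [normalOrdered, Finsupp.linearCombination_apply, Finsupp.sum, Finset.mul_sum]
  exact sum_mem fun ab _ => by
    rw [mul_smul_comm]
    exact Submodule.smul_mem _ _ (hw ab.1 ab.2)

theorem Wq_mul_mem_range_normalOrdered {u : WeylAlgebra K}
    (hu : u ∈ LinearMap.range (normalOrdered K)) :
    Wq K * u ∈ LinearMap.range (normalOrdered K) :=
  mul_mem_range_normalOrdered (fun a b => by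
    rw [← mul_assoc, ← pow_succ']
    exact Wq_pow_mul_Wp_pow_mem_range_normalOrdered K a (b + 1)) hu

theorem Wp_mul_mem_range_normalOrdered {u : WeylAlgebra K}
    (hu : u ∈ LinearMap.range (normalOrdered K)) :
    Wp K * u ∈ LinearMap.range (normalOrdered K) := by
  refine mul_mem_range_normalOrdered (fun a b => ?_) hu
  rcases b with _ | b
  · simpa [← pow_succ'] using Wq_pow_mul_Wp_pow_mem_range_normalOrdered K (a + 1) 0
  · rw [← mul_assoc, mul_pow_succ_eq_of_mul_eq_add_one (Wp_mul_Wq K), add_mul, mul_assoc,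
      ← pow_succ', mul_assoc, ← nsmul_eq_mul]
    exact add_mem (Wq_pow_mul_Wp_pow_mem_range_normalOrdered K _ _)
      (nsmul_mem (Wq_pow_mul_Wp_pow_mem_range_normalOrdered K _ _) _)

variable (K)

theorem normalOrdered_surjective : Function.Surjective (normalOrdered K) := by
  suffices h : ∀ w : WeylAlgebra K, ∀ u ∈ LinearMap.range (normalOrdered K),
      w * u ∈ LinearMap.range (normalOrdered K) by
    intro w
    simpa using h w 1 (by simpa using Wq_pow_mul_Wp_pow_mem_range_normalOrdered K 0 0)
  intro w
  obtain ⟨z, rfl⟩ := RingQuot.mkAlgHom_surjective K (WeylRel K) w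
  induction z using FreeAlgebra.induction with
  | grade0 r =>
    intro u hu
    rw [AlgHom.commutes, Algebra.algebraMap_eq_smul_one, smul_one_mul]
    exact Submodule.smul_mem _ r hu
  | grade1 k =>
    fin_cases k
    exacts [fun u => Wp_mul_mem_range_normalOrdered, fun u => Wq_mul_mem_range_normalOrdered]
  | mul z z' hz hz' =>
    intro u hu
    rw [map_mul, mul_assoc]
    exact hz _ (hz' u hu)
  | add z z' hz hz' =>
    intro u hu
    rw [map_add, add_mul]
    exact add_mem (hz u hu) (hz' u hu)

end NormalOrdering

section FockCoefficients

variable {K : Type*} [Field K]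

theorem coeff_fockRep_normalOrdered (c : (ℕ × ℕ) →₀ K) (n k : ℕ) :
    (fockRep K (normalOrdered K c) (X ^ n)).coeff k =
      ∑ ab ∈ c.support, if k = n - ab.1 + ab.2 then c ab * n.descFactorial ab.1 else 0 := by
  simp only [normalOrdered, Finsupp.linearCombination_apply, Finsupp.sum, map_sum, map_smul,
    LinearMap.sum_apply, LinearMap.smul_apply, fockRep_Wq_pow_mul_Wp_pow_X_pow,
    finsetSum_coeff, coeff_smul, coeff_X_pow, smul_eq_mul]
  refine Finset.sum_congr rfl fun ab _ => ?_
  split_ifs <;> ring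

theorem coeff_fockRep_normalOrdered_of_forall_lt (c : (ℕ × ℕ) →₀ K) (a b : ℕ)
    (hc : ∀ a' < a, ∀ b', c (a', b') = 0) :
    (fockRep K (normalOrdered K c) (X ^ a)).coeff b = c (a, b) * a.factorial := by
  rw [coeff_fockRep_normalOrdered, Finset.sum_eq_single (a, b)]
  · simp [Nat.descFactorial_self]
  · rintro ⟨a', b'⟩ - hne
    rcases lt_trichotomy a' a with hlt | rfl | hgt
    · simp [hc a' hlt b']
    · simp only [Nat.sub_self, zero_add]
      rw [if_neg fun h => hne (by rw [h])]
    · simp [Nat.descFactorial_eq_zero_iff_lt.mpr hgt]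
  · intro h
    simp [Finsupp.notMem_support_iff.mp h]

noncomputable def diagonalPoly (c : (ℕ × ℕ) →₀ K) (s : ℤ) : K[X] :=
  ∑ ab ∈ c.support with (ab.2 : ℤ) = ab.1 + s, C (c ab) * descPochhammer K ab.1

theorem coeff_fockRep_normalOrdered_eq_eval_diagonalPoly (c : (ℕ × ℕ) →₀ K) {s : ℤ}
    {n e : ℕ} (he : (e : ℤ) = n + s) :
    (fockRep K (normalOrdered K c) (X ^ n)).coeff e = (diagonalPoly c s).eval (n : K) := by
  rw [coeff_fockRep_normalOrdered, diagonalPoly, eval_finsetSum, Finset.sum_filter]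
  refine Finset.sum_congr rfl fun ab _ => ?_
  rw [eval_mul, eval_C, descPochhammer_eval_eq_descFactorial]
  by_cases ha : ab.1 ≤ n
  · exact if_congr (by omega) rfl rfl
  · simp [Nat.descFactorial_eq_zero_iff_lt.mpr (not_le.mp ha)]

theorem diagonalPoly_eval_zero_of_neg (c : (ℕ × ℕ) →₀ K) {s : ℤ} (hs : s < 0) :
    (diagonalPoly c s).eval 0 = 0 := by
  rw [diagonalPoly, eval_finsetSum]
  refine Finset.sum_eq_zero fun ab hab => ?_
  have ha : ab.1 ≠ 0 := by
    have := (Finset.mem_filter.mp hab).2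
    omega
  simp [ha]

end FockCoefficients

section CharZero

variable (K : Type*) [Field K] [CharZero K]

theorem fockRep_injective : Function.Injective (fockRep K) := by
  rw [injective_iff_map_eq_zero]
  intro w hw
  obtain ⟨c, rfl⟩ := normalOrdered_surjective K w
  suffices hc : ∀ a b, c (a, b) = 0 by
    rw [show c = 0 from Finsupp.ext fun ab => hc ab.1 ab.2, map_zero]
  intro a
  induction a using Nat.strong_induction_on with
  | _ a ih =>
    intro b
    have h := coeff_fockRep_normalOrdered_of_forall_lt c a b ih
    rw [hw] at h
    simpa [Nat.factorial_ne_zero] using h.symm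

variable {K}

theorem coeff_fockRep_eq_zero_of_mem_Wgrade {s : ℤ} {w : WeylAlgebra K} (hw : w ∈ Wgrade K s)
    {n k : ℕ} (hk : (k : ℤ) ≠ n + s) : (fockRep K w (X ^ n)).coeff k = 0 := by
  have h := congrArg (fun v => (fockRep K v (X ^ n)).coeff k) hw
  simp only [map_sub, map_mul, map_zsmul, fockRep_Wp, fockRep_Wq, LinearMap.sub_apply,
    Module.End.mul_apply, LinearMap.smul_apply, LinearMap.mulLeft_apply, derivative_mul,
    derivative_X, one_mul, map_add, coeff_add, coeff_sub, X_mul_derivative_X_pow, map_smul,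
    coeff_smul, coeff_X_mul_derivative, smul_eq_mul] at h
  rw [zsmul_eq_mul] at h
  have hne : (k : K) - n - s ≠ 0 := by
    have : (k : ℤ) - n - s ≠ 0 := by omega
    exact_mod_cast this
  exact (mul_eq_zero.mp (by linear_combination h)).resolve_left hne

theorem fockRep_normalOrdered_X_pow_of_mem_Wgrade {c : (ℕ × ℕ) →₀ K} {s : ℤ}
    (hc : normalOrdered K c ∈ Wgrade K s) {n e : ℕ} (he : (e : ℤ) = n + s) :
    fockRep K (normalOrdered K c) (X ^ n) = (diagonalPoly c s).eval (n : K) • X ^ e := by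
  ext k
  rw [coeff_smul, coeff_X_pow, smul_eq_mul]
  split_ifs with hk
  · rw [hk, mul_one, coeff_fockRep_normalOrdered_eq_eval_diagonalPoly c he]
  · rw [mul_zero]
    exact coeff_fockRep_eq_zero_of_mem_Wgrade hc (by omega)

theorem normalOrdered_eq_zero_of_diagonalPoly_eq_zero {c : (ℕ × ℕ) →₀ K} {s : ℤ}
    (hc : normalOrdered K c ∈ Wgrade K s) (h : diagonalPoly c s = 0) : normalOrdered K c = 0 := by
  apply fockRep_injective K
  rw [map_zero]
  refine lhom_ext' fun n => LinearMap.ext fun a => ?_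
  suffices hX : fockRep K (normalOrdered K c) (X ^ n) = 0 by
    simp [← smul_X_eq_monomial, hX]
  ext k
  rw [coeff_zero]
  by_cases hk : (k : ℤ) = n + s
  · rw [coeff_fockRep_normalOrdered_eq_eval_diagonalPoly c hk, h, eval_zero]
  · exact coeff_fockRep_eq_zero_of_mem_Wgrade hc hk

theorem diagonalPoly_mul_taylor_eq_of_commute {I M : ℕ} {c d : (ℕ × ℕ) →₀ K}
    (hc : normalOrdered K c ∈ Wgrade K I) (hd : normalOrdered K d ∈ Wgrade K (-M))
    (hcd : Commute (normalOrdered K c) (normalOrdered K d)) :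
    diagonalPoly d (-M) * taylor (-M : K) (diagonalPoly c I) =
      diagonalPoly c I * taylor (I : K) (diagonalPoly d (-M)) := by
  set P := diagonalPoly c I
  set Q := diagonalPoly d (-M)
  have hP (n : ℕ) : fockRep K (normalOrdered K c) (X ^ n) = P.eval (n : K) • X ^ (n + I) :=
    fockRep_normalOrdered_X_pow_of_mem_Wgrade hc (by push_cast; ring)
  have hQ (n : ℕ) :
      fockRep K (normalOrdered K d) (X ^ (n + M)) = Q.eval ((n + M : ℕ) : K) • X ^ n :=
    fockRep_normalOrdered_X_pow_of_mem_Wgrade hd (by push_cast; ring)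
  have hPQ (n : ℕ) :
      Q.eval ((n + M : ℕ) : K) * P.eval (n : K) =
        P.eval ((n + M : ℕ) : K) * Q.eval ((n + I + M : ℕ) : K) := by
    have h := congrArg (fun w => fockRep K w (X ^ (n + M))) hcd.eq
    simp only [map_mul, Module.End.mul_apply, hQ, hP, map_smul, smul_smul,
      add_right_comm n M I] at h
    exact smul_left_injective K (pow_ne_zero _ X_ne_zero) h
  refine eq_of_infinite_eval_eq _ _ <| Set.infinite_of_injective_forall_mem
    (f := fun n : ℕ => ((n + M : ℕ) : K)) (fun m n h => by simpa using h) fun n => ?_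
  simp only [Set.mem_ofPred_eq, eval_mul, taylor_eval]
  have hshift : ((n + M : ℕ) : K) + -M = n := by push_cast; ring
  have hshift' : ((n + M : ℕ) : K) + I = ((n + I + M : ℕ) : K) := by push_cast; ring
  rw [hshift, hshift']
  exact hPQ n

end CharZero

/-- Lemma 3.3. -/
theorem eq_zero_of_commute_of_grade (i j : ℤ) (hi : 0 < i) (hj : j < 0)
    (x y : WeylAlgebra F) (hx : x ∈ Wgrade F i) (hy : y ∈ Wgrade F j)
    (hxy : x * y - y * x = 0) :
    x = 0 ∨ y = 0 := by
  obtain ⟨I, rfl⟩ := Int.eq_ofNat_of_zero_le hi.le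
  obtain ⟨M, rfl⟩ : ∃ M : ℕ, j = -M := ⟨j.natAbs, by omega⟩
  obtain ⟨c, rfl⟩ := normalOrdered_surjective F x
  obtain ⟨d, rfl⟩ := normalOrdered_surjective F y
  have hpoly := diagonalPoly_mul_taylor_eq_of_commute hx hy (sub_eq_zero.mp hxy)
  refine or_iff_not_imp_left.mpr fun hx₀ => normalOrdered_eq_zero_of_diagonalPoly_eq_zero hy ?_
  have hP : diagonalPoly c I ≠ 0 :=
    fun h => hx₀ (normalOrdered_eq_zero_of_diagonalPoly_eq_zero hx h)
  exact eq_zero_of_mul_taylor_eq hP (by omega) (diagonalPoly_eval_zero_of_neg d (by omega)) hpoly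
end

section
/- Let x ∈ A_i with i > 0. If v_{ρ,σ}(x) ≥ ρ + σ for some pair of relatively prime positive integers (ρ,σ), then x is unsolvable. (Lemma 3.5) -/
open scoped BigOperators

variable (F : Type*) [Field F] [CharZero F]

/-!
If `[x, y] = 1` with `x` homogeneous of degree `n > 0`, the degree-`0` part of this identity
shows that the degree-`(-n)` component of `y` is again a solution, so we may take `y` homogeneous.
Then `x = f(h) qⁿ` and `y = pⁿ g(h)` with `h = pq`. Since `pⁿ h = (h + n) pⁿ`,
`qⁿ h = (h - n) qⁿ` and `qⁿ pⁿ = φ(h)` with `φ(t) = (t - 1)⋯(t - n)`, the identity becomes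
`G(t) - G(t + n) = 1` for `G = f g φ`. Such a `G` has degree one, so `n = 1` and `f` is a
constant: `x` is a multiple of `q`, whose `(ρ, σ)`-degree `σ` is smaller than `ρ + σ`.
-/

open Polynomial

theorem SemiconjBy.aeval {R A : Type*} [CommSemiring R] [Semiring A] [Algebra R A] {a b c : A}
    (h : SemiconjBy a b c) (u : R[X]) : SemiconjBy a (aeval b u) (aeval c u) := by
  induction u using Polynomial.induction_on' with
  | add u v hu hv => simpa only [map_add] using hu.add_right hv
  | monomial n r =>
    simpa only [aeval_monomial] using
      SemiconjBy.mul_right (Algebra.commute_algebraMap_right r a) (h.pow_right n)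

namespace Polynomial

variable {R : Type*} [CommRing R]

theorem ascPochhammer_succ_comp_X_sub_C (n : ℕ) :
    (ascPochhammer R (n + 1)).comp (X - C ((n + 1 : ℕ) : R))
      = (X - C ((n : R) + 1)) * (ascPochhammer R n).comp (X - C (n : R)) := by
  rw [ascPochhammer_succ_left, mul_comp, X_comp, comp_assoc]
  congr 2
  · push_cast; rfl
  · simp only [add_comp, X_comp, one_comp]
    push_cast
    simp only [C_add, C_1]
    ring

variable [IsDomain R]

theorem eq_zero_of_sum_smul_eq_zero_of_injOn_natDegree {ι : Type*} {s : Finset ι}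
    {P : ι → R[X]} {c : ι → R} (hP : ∀ i ∈ s, P i ≠ 0)
    (hinj : Set.InjOn (fun i => (P i).natDegree) s)
    (h : ∑ i ∈ s, c i • P i = 0) : ∀ i ∈ s, c i = 0 := by
  have hdeg : ∀ i ∈ s, c i ≠ 0 → (c i • P i).degree = (P i).natDegree := fun i hi hc => by
    rw [smul_eq_C_mul, degree_C_mul hc, degree_eq_natDegree (hP i hi)]
  have hsup := degree_sum_eq_of_disjoint (fun i => c i • P i) s ?_
  · intro i hi
    by_contra hc
    have hle := Finset.le_sup (f := fun i => (c i • P i).degree) hi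
    rw [← hsup, h, degree_zero, le_bot_iff, degree_eq_bot, smul_eq_zero] at hle
    exact hle.elim hc (hP i hi)
  · rintro i ⟨hi, hi0⟩ j ⟨hj, hj0⟩ hij
    have hci : c i ≠ 0 := left_ne_zero_of_smul hi0
    have hcj : c j ≠ 0 := left_ne_zero_of_smul hj0
    simp only [Function.onFun, Function.comp, hdeg i hi hci, hdeg j hj hcj, ne_eq, Nat.cast_inj]
    exact fun e => hij (hinj hi hj e)

theorem natDegree_eq_one_of_sub_comp_X_add_C_eq_one [CharZero R] {G : R[X]} {a : R}
    (ha : a ≠ 0) (h : G - G.comp (X + C a) = 1) : G.natDegree = 1 := by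
  have heval : ∀ N : ℕ, G.eval (N * a) = G.eval 0 - N := by
    intro N
    induction N with
    | zero => simp
    | succ N ih =>
      have hstep := congrArg (eval ((N : R) * a)) h
      simp only [eval_sub, eval_comp, eval_add, eval_X, eval_C, eval_one] at hstep
      push_cast
      rw [add_one_mul]
      linear_combination ih - hstep
  have hlin : G.comp (C a * X) = C (G.eval 0) - X := by
    refine eq_of_infinite_eval_eq _ _ (Set.infinite_of_injective_forall_mem
      (f := fun N : ℕ => (N : R)) Nat.cast_injective fun N => ?_)
    simp [eval_comp, mul_comm a, heval]
  have hdeg := congrArg natDegree hlin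
  rwa [natDegree_comp, natDegree_C_mul_X _ ha, mul_one, ← neg_sub, natDegree_neg,
    natDegree_X_sub_C] at hdeg

end Polynomial

namespace WeylAlgebra

section Fock

variable (R : Type*) [CommRing R]

lemma derivative_mul_mulLeft_X :
    (derivative : Module.End R R[X]) * LinearMap.mulLeft R X
      = LinearMap.mulLeft R X * derivative + 1 := by
  refine LinearMap.ext fun f => ?_
  simp [Module.End.mul_apply, derivative_mul, add_comm]

noncomputable def fockRep : WeylAlgebra R →ₐ[R] Module.End R R[X] :=
  RingQuot.liftAlgHom R ⟨FreeAlgebra.lift R ![derivative, LinearMap.mulLeft R X], by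
    rintro _ _ ⟨⟩
    simpa using derivative_mul_mulLeft_X R⟩

end Fock

variable {K : Type*} [Field K]

@[simp] lemma fockRep_Wp : fockRep K (Wp K) = derivative := by
  rw [Wp, fockRep, RingQuot.liftAlgHom_mkAlgHom_apply, FreeAlgebra.lift_ι_apply]
  rfl

@[simp] lemma fockRep_Wq : fockRep K (Wq K) = LinearMap.mulLeft K X := by
  rw [Wq, fockRep, RingQuot.liftAlgHom_mkAlgHom_apply, FreeAlgebra.lift_ι_apply]
  rfl

lemma fockRep_Wmono_X_pow (k l m : ℕ) :
    fockRep K (Wmono K k l) (X ^ m) = ((m + l).descFactorial k : K) • X ^ (m + l - k) := by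
  simp [Wmono, Module.End.mul_apply, LinearMap.pow_mulLeft, Module.End.pow_apply,
    ← pow_add, add_comm l, iterate_derivative_X_pow_eq_smul]

lemma coeff_fockRep_sum_Wmono_X_pow (s : Finset (ℕ × ℕ)) (γ : ℕ × ℕ → K) (m d : ℕ) :
    (fockRep K (∑ kl ∈ s, γ kl • Wmono K kl.1 kl.2) (X ^ m)).coeff d
      = ∑ kl ∈ s with m + kl.2 - kl.1 = d, γ kl * ((m + kl.2).descFactorial kl.1 : K) := by
  simp [LinearMap.sum_apply, fockRep_Wmono_X_pow, coeff_X_pow, Finset.sum_filter, eq_comm]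

lemma Wq_mul_Wp : Wq K * Wp K = Wp K * Wq K - 1 := by
  have h := RingQuot.mkAlgHom_rel K (WeylRel.comm (F := K))
  simp only [map_mul, map_add, map_one] at h
  rw [Wp, Wq, h, add_sub_cancel_right]

lemma Wq_mul_Wp_pow_succ (k : ℕ) :
    Wq K * Wp K ^ (k + 1) = Wp K ^ (k + 1) * Wq K - (k + 1 : K) • Wp K ^ k := by
  induction k with
  | zero => simp [Wq_mul_Wp]
  | succ k ih =>
    rw [pow_succ _ (k + 1), ← mul_assoc, ih, sub_mul, mul_assoc (Wp K ^ (k + 1)), Wq_mul_Wp,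
      smul_mul_assoc, ← pow_succ, mul_sub, mul_one, ← mul_assoc, ← pow_succ]
    push_cast
    module

lemma Wq_mul_Wmono_mem_span (k l : ℕ) :
    Wq K * Wmono K k l ∈ Submodule.span K (Set.range fun kl : ℕ × ℕ => Wmono K kl.1 kl.2) := by
  have hmem : ∀ k l,
      Wmono K k l ∈ Submodule.span K (Set.range fun kl : ℕ × ℕ => Wmono K kl.1 kl.2) :=
    fun k l => Submodule.subset_span ⟨(k, l), rfl⟩
  cases k with
  | zero => simpa [Wmono, ← pow_succ'] using hmem 0 (l + 1)
  | succ k =>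
    rw [Wmono, ← mul_assoc, Wq_mul_Wp_pow_succ, sub_mul, smul_mul_assoc, mul_assoc, ← pow_succ']
    exact sub_mem (hmem _ _) (Submodule.smul_mem _ _ (hmem _ _))

theorem span_Wmono_eq_top :
    Submodule.span K (Set.range fun kl : ℕ × ℕ => Wmono K kl.1 kl.2) = ⊤ := by
  set S := Submodule.span K (Set.range fun kl : ℕ × ℕ => Wmono K kl.1 kl.2)
  have hmul : ∀ a : FreeAlgebra K (Fin 2),
      S ≤ S.comap (LinearMap.mulLeft K (RingQuot.mkAlgHom K (WeylRel K) a)) := by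
    intro a
    induction a using FreeAlgebra.induction with
    | grade0 r => intro w hw; simpa [Algebra.smul_def] using S.smul_mem r hw
    | grade1 i =>
      refine Submodule.span_le.2 (Set.range_subset_iff.2 fun kl => ?_)
      fin_cases i
      · exact Submodule.subset_span
          ⟨(kl.1 + 1, kl.2), by simp [Wmono, Wp, ← mul_assoc, pow_succ']⟩
      · exact Wq_mul_Wmono_mem_span kl.1 kl.2
    | mul a b ha hb => intro w hw; simpa [mul_assoc] using ha (hb hw)
    | add a b ha hb =>
      intro w hw
      simpa [add_mul] using
        add_mem (Submodule.mem_comap.1 (ha hw)) (Submodule.mem_comap.1 (hb hw))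
  refine eq_top_iff.2 fun z _ => ?_
  obtain ⟨a, rfl⟩ := RingQuot.mkAlgHom_surjective K (WeylRel K) z
  have hone : (1 : WeylAlgebra K) ∈ S := Submodule.subset_span ⟨(0, 0), by simp [Wmono]⟩
  simpa using hmul a hone

variable (K) in
noncomputable abbrev Wh : WeylAlgebra K := Wp K * Wq K

lemma semiconjBy_Wp_pow (n : ℕ) : SemiconjBy (Wp K ^ n) (Wh K) (Wh K + n) := by
  induction n with
  | zero => simp
  | succ n ih =>
    rw [pow_succ']
    refine SemiconjBy.mul_left ?_ ih
    simp only [SemiconjBy, Wh, Nat.cast_succ, mul_add, add_mul, mul_assoc, Wq_mul_Wp, mul_sub,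
      mul_one, one_mul, Nat.cast_comm]
    abel

lemma semiconjBy_Wq_pow (n : ℕ) : SemiconjBy (Wq K ^ n) (Wh K) (Wh K - n) := by
  induction n with
  | zero => simp
  | succ n ih =>
    rw [pow_succ']
    refine SemiconjBy.mul_left ?_ ih
    simp only [SemiconjBy, Wh, Nat.cast_succ, mul_sub, sub_mul, add_mul, ← mul_assoc, Wq_mul_Wp,
      one_mul, Nat.cast_comm]
    abel

lemma Wh_mul_Wmono_sub (k l : ℕ) :
    Wh K * Wmono K k l - Wmono K k l * Wh K = ((l : K) - k) • Wmono K k l := by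
  have hp := (semiconjBy_Wp_pow (K := K) k).eq
  have hq := (semiconjBy_Wq_pow (K := K) l).eq
  have hl : Wp K ^ k * ((l : WeylAlgebra K) * Wq K ^ l) = l * (Wp K ^ k * Wq K ^ l) := by
    rw [← mul_assoc, ← Nat.cast_comm, mul_assoc]
  rw [Wmono, mul_assoc (Wp K ^ k), hq, sub_mul, mul_sub, ← mul_assoc (Wp K ^ k) (Wh K), hp, hl,
    Algebra.smul_def, map_sub, map_natCast, map_natCast]
  simp only [add_mul, sub_mul, mul_assoc]
  abel

lemma mem_Wgrade_iff_sub_eq {s : ℤ} {z : WeylAlgebra K} :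
    z ∈ Wgrade K s ↔ Wh K * z - z * Wh K = (s : K) • z := by
  rw [Int.cast_smul_eq_zsmul K s z]
  rfl

lemma Wmono_mem_Wgrade (k l : ℕ) : Wmono K k l ∈ Wgrade K (l - k) := by
  rw [mem_Wgrade_iff_sub_eq, Wh_mul_Wmono_sub]
  push_cast
  rfl

lemma one_mem_Wgrade_zero : (1 : WeylAlgebra K) ∈ Wgrade K 0 := by
  simp [mem_Wgrade_iff_sub_eq]

lemma mul_mem_Wgrade {s t : ℤ} {a b : WeylAlgebra K} (ha : a ∈ Wgrade K s)
    (hb : b ∈ Wgrade K t) : a * b ∈ Wgrade K (s + t) := by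
  rw [mem_Wgrade_iff_sub_eq] at *
  calc Wh K * (a * b) - a * b * Wh K
        = (Wh K * a - a * Wh K) * b + a * (Wh K * b - b * Wh K) := by
        simp only [sub_mul, mul_sub, mul_assoc]
        abel
    _ = ((s + t : ℤ) : K) • (a * b) := by
        rw [ha, hb, Int.cast_add, add_smul, smul_mul_assoc, mul_smul_comm]

lemma aeval_Wh_mul_Wq_pow (u : K[X]) (n : ℕ) :
    aeval (Wh K) u * Wq K ^ n = Wq K ^ n * aeval (Wh K) (u.comp (X + C (n : K))) := by
  rw [((semiconjBy_Wq_pow n).aeval _).eq, aeval_comp]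
  simp

lemma Wp_pow_mul_Wq_pow (n : ℕ) : Wp K ^ n * Wq K ^ n = aeval (Wh K) (ascPochhammer K n) := by
  induction n with
  | zero => simp
  | succ n ih =>
    rw [pow_succ, pow_succ', mul_assoc, ← mul_assoc (Wp K), ← mul_assoc, (semiconjBy_Wp_pow n).eq,
      mul_assoc, ih, ascPochhammer_succ_right, mul_comm, map_mul]
    simp

lemma Wq_pow_mul_Wp_pow (n : ℕ) :
    Wq K ^ n * Wp K ^ n = aeval (Wh K) ((ascPochhammer K n).comp (X - C (n : K))) := by
  induction n with
  | zero => simp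
  | succ n ih =>
    rw [pow_succ, pow_succ', mul_assoc, ← mul_assoc (Wq K), Wq_mul_Wp, ← Wh, ← mul_assoc,
      mul_sub, mul_one, (semiconjBy_Wq_pow n).eq, ← sub_one_mul, mul_assoc, ih,
      ascPochhammer_succ_comp_X_sub_C, map_mul]
    simp [sub_sub]

lemma Wmono_self_add (k n : ℕ) :
    Wmono K k (k + n) = aeval (Wh K) (ascPochhammer K k) * Wq K ^ n := by
  rw [Wmono, pow_add, ← mul_assoc, Wp_pow_mul_Wq_pow]

lemma Wmono_add_self (k n : ℕ) :
    Wmono K (k + n) k = Wp K ^ n * aeval (Wh K) (ascPochhammer K k) := by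
  rw [Wmono, add_comm, pow_add, mul_assoc, Wp_pow_mul_Wq_pow]

lemma commutator_aeval_mul_Wq_pow_Wp_pow_mul_aeval (f g : K[X]) (n : ℕ) :
    (aeval (Wh K) f * Wq K ^ n) * (Wp K ^ n * aeval (Wh K) g)
      - (Wp K ^ n * aeval (Wh K) g) * (aeval (Wh K) f * Wq K ^ n)
      = aeval (Wh K) (f * g * (ascPochhammer K n).comp (X - C (n : K))
          - (f * g * (ascPochhammer K n).comp (X - C (n : K))).comp (X + C (n : K))) := by
  have hxy : (aeval (Wh K) f * Wq K ^ n) * (Wp K ^ n * aeval (Wh K) g)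
      = aeval (Wh K) (f * (ascPochhammer K n).comp (X - C (n : K)) * g) := by
    rw [mul_assoc, ← mul_assoc (Wq K ^ n), Wq_pow_mul_Wp_pow, map_mul, map_mul, mul_assoc]
  have hyx : (Wp K ^ n * aeval (Wh K) g) * (aeval (Wh K) f * Wq K ^ n)
      = aeval (Wh K) (ascPochhammer K n * (g * f).comp (X + C (n : K))) := by
    rw [mul_assoc, ← mul_assoc (aeval (Wh K) g), ← map_mul, aeval_Wh_mul_Wq_pow, ← mul_assoc,
      Wp_pow_mul_Wq_pow, map_mul]
  rw [hxy, hyx, ← map_sub]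
  congr 1
  simp only [mul_comp, comp_assoc, sub_comp, X_comp, C_comp, add_sub_cancel_right, comp_X]
  ring

lemma fockRep_aeval_Wh_X_pow (u : K[X]) (m : ℕ) :
    fockRep K (aeval (Wh K) u) (X ^ m) = u.eval ((m : K) + 1) • X ^ m := by
  have hWh : fockRep K (Wh K) (X ^ m) = ((m : K) + 1) • X ^ m := by
    simpa [Wmono] using fockRep_Wmono_X_pow (K := K) 1 1 m
  rw [← aeval_algHom_apply]
  exact Module.End.aeval_apply_of_hasEigenvector
    ⟨Module.End.mem_eigenspace_iff.2 hWh, pow_ne_zero _ X_ne_zero⟩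

variable [CharZero K]

theorem linearIndependent_Wmono :
    LinearIndependent K (fun kl : ℕ × ℕ => Wmono K kl.1 kl.2) := by
  refine linearIndependent_iff'.2 fun s γ hγ kl₀ hkl₀ => ?_
  set diag := s.filter fun kl => (kl.2 : ℤ) - kl.1 = (kl₀.2 : ℤ) - kl₀.1
  set M := s.sup Prod.fst
  have hM : ∀ kl ∈ s, kl.1 ≤ M := fun kl hkl => Finset.le_sup (f := Prod.fst) hkl
  -- For `m ≥ M`, the coefficient of `X ^ (m + l₀ - k₀)` in `z (X ^ m)` is the value at `m` of a
  -- combination of polynomials of distinct degrees, one for each monomial on the diagonal of `kl₀`.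
  have hP : ∑ kl ∈ diag, γ kl • (descPochhammer K kl.1).comp (X + C (kl.2 : K)) = 0 := by
    refine eq_zero_of_infinite_isRoot _ (Set.infinite_of_injective_forall_mem
      (f := fun j : ℕ => ((M + j : ℕ) : K)) (fun a b hab => by simpa using hab) fun j => ?_)
    have hcoeff := coeff_fockRep_sum_Wmono_X_pow s γ (M + j) (M + j + kl₀.2 - kl₀.1)
    rw [hγ, map_zero, LinearMap.zero_apply, coeff_zero] at hcoeff
    simp only [IsRoot, eval_finsetSum, eval_smul, eval_comp, eval_add, eval_X, eval_C,
      smul_eq_mul, hcoeff]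
    refine Finset.sum_congr (Finset.filter_congr fun kl hkl => ?_) fun kl _ => by
      rw [← Nat.cast_add, descPochhammer_eval_eq_descFactorial]
    have := hM kl hkl
    have := hM kl₀ hkl₀
    omega
  refine eq_zero_of_sum_smul_eq_zero_of_injOn_natDegree (fun kl _ => ?_)
    (fun a ha b hb hab => ?_) hP kl₀ (Finset.mem_filter.2 ⟨hkl₀, rfl⟩)
  · exact ((monic_descPochhammer K kl.1).comp (monic_X_add_C _)
      (by rw [natDegree_X_add_C]; exact one_ne_zero)).ne_zero
  · simp only [natDegree_comp, descPochhammer_natDegree, natDegree_X_add_C, mul_one] at hab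
    have := (Finset.mem_filter.1 ha).2
    have := (Finset.mem_filter.1 hb).2
    ext <;> omega

variable (K) in
noncomputable def Wbasis : Module.Basis (ℕ × ℕ) K (WeylAlgebra K) :=
  .mk linearIndependent_Wmono span_Wmono_eq_top.ge

@[simp] lemma Wbasis_apply (kl : ℕ × ℕ) : Wbasis K kl = Wmono K kl.1 kl.2 :=
  Module.Basis.mk_apply _ _ _

lemma represents_iff_repr_eq {α : (ℕ × ℕ) →₀ K} {x : WeylAlgebra K} :
    Represents K α x ↔ (Wbasis K).repr x = α := by
  rw [← LinearEquiv.eq_symm_apply, Module.Basis.repr_symm_apply, Finsupp.linearCombination_apply,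
    Represents]
  simp

lemma represents_smul_Wq_iff {α : (ℕ × ℕ) →₀ K} {c : K} :
    Represents K α (c • Wq K) ↔ α = Finsupp.single (0, 1) c := by
  rw [represents_iff_repr_eq, show Wq K = Wbasis K (0, 1) by simp [Wmono], map_smul,
    Module.Basis.repr_self, Finsupp.smul_single_one, eq_comm]

lemma repr_Wh_mul_sub (z : WeylAlgebra K) (kl : ℕ × ℕ) :
    (Wbasis K).repr (Wh K * z - z * Wh K) kl = ((kl.2 : K) - kl.1) * (Wbasis K).repr z kl := by
  let ad := LinearMap.mulLeft K (Wh K) - LinearMap.mulRight K (Wh K)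
  have : Finsupp.lapply kl ∘ₗ (Wbasis K).repr.toLinearMap ∘ₗ ad
      = ((kl.2 : K) - kl.1) • (Finsupp.lapply kl ∘ₗ (Wbasis K).repr.toLinearMap) := by
    refine (Wbasis K).ext fun ij => ?_
    simp only [ad, LinearMap.comp_apply, LinearMap.sub_apply, LinearMap.mulLeft_apply,
      LinearMap.mulRight_apply, Wbasis_apply, Wh_mul_Wmono_sub, LinearMap.smul_apply]
    simp [← Wbasis_apply, Finsupp.single_apply]
    split_ifs with h <;> simp [h]
  exact LinearMap.congr_fun this z

lemma mem_Wgrade_iff {s : ℤ} {z : WeylAlgebra K} :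
    z ∈ Wgrade K s ↔ ∀ kl, (Wbasis K).repr z kl ≠ 0 → (kl.2 : ℤ) - kl.1 = s := by
  rw [mem_Wgrade_iff_sub_eq, ← (Wbasis K).repr.injective.eq_iff, Finsupp.ext_iff]
  refine forall_congr' fun kl => ?_
  rw [repr_Wh_mul_sub, map_smul, Finsupp.smul_apply, smul_eq_mul, ← sub_eq_zero, ← sub_mul,
    mul_eq_zero, sub_eq_zero, or_iff_not_imp_right]
  exact imp_congr_right fun _ => by norm_cast

variable (K) in
noncomputable def gradedPart (s : ℤ) : WeylAlgebra K →ₗ[K] WeylAlgebra K where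
  toFun z := (Wbasis K).repr.symm (((Wbasis K).repr z).filter fun kl => (kl.2 : ℤ) - kl.1 = s)
  map_add' := by simp [Finsupp.filter_add]
  map_smul' := by simp [Finsupp.filter_smul]

lemma repr_gradedPart (s : ℤ) (z : WeylAlgebra K) :
    (Wbasis K).repr (gradedPart K s z)
      = ((Wbasis K).repr z).filter fun kl => (kl.2 : ℤ) - kl.1 = s := by
  simp [gradedPart]

lemma gradedPart_mem_Wgrade (s : ℤ) (z : WeylAlgebra K) : gradedPart K s z ∈ Wgrade K s := by
  refine mem_Wgrade_iff.2 fun kl hkl => ?_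
  rw [repr_gradedPart, Finsupp.filter_apply] at hkl
  exact of_not_not fun h => hkl (if_neg h)

lemma gradedPart_of_mem_Wgrade {s t : ℤ} {z : WeylAlgebra K} (hz : z ∈ Wgrade K t) :
    gradedPart K s z = if t = s then z else 0 := by
  apply (Wbasis K).repr.injective
  rw [repr_gradedPart]
  split_ifs with h
  · exact (Finsupp.filter_eq_self_iff _ _).2 fun kl hkl => (mem_Wgrade_iff.1 hz kl hkl).trans h
  · rw [map_zero]
    exact (Finsupp.filter_eq_zero_iff _ _).2 fun kl hkl =>
      of_not_not fun h' => h ((mem_Wgrade_iff.1 hz kl h').symm.trans hkl)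

lemma gradedPart_mul_left {n : ℤ} {x : WeylAlgebra K} (hx : x ∈ Wgrade K n) (s : ℤ)
    (z : WeylAlgebra K) : gradedPart K (n + s) (x * z) = x * gradedPart K s z := by
  have : gradedPart K (n + s) ∘ₗ LinearMap.mulLeft K x
      = LinearMap.mulLeft K x ∘ₗ gradedPart K s := by
    refine (Wbasis K).ext fun kl => ?_
    have hmono := Wmono_mem_Wgrade (K := K) kl.1 kl.2
    simp only [LinearMap.comp_apply, LinearMap.mulLeft_apply, Wbasis_apply,
      gradedPart_of_mem_Wgrade hmono, gradedPart_of_mem_Wgrade (mul_mem_Wgrade hx hmono)]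
    split_ifs <;> first | omega | simp
  exact LinearMap.congr_fun this z

lemma gradedPart_mul_right {n : ℤ} {x : WeylAlgebra K} (hx : x ∈ Wgrade K n) (s : ℤ)
    (z : WeylAlgebra K) : gradedPart K (s + n) (z * x) = gradedPart K s z * x := by
  have : gradedPart K (s + n) ∘ₗ LinearMap.mulRight K x
      = LinearMap.mulRight K x ∘ₗ gradedPart K s := by
    refine (Wbasis K).ext fun kl => ?_
    have hmono := Wmono_mem_Wgrade (K := K) kl.1 kl.2
    simp only [LinearMap.comp_apply, LinearMap.mulRight_apply, Wbasis_apply,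
      gradedPart_of_mem_Wgrade hmono, gradedPart_of_mem_Wgrade (mul_mem_Wgrade hmono hx)]
    split_ifs <;> first | omega | simp
  exact LinearMap.congr_fun this z

lemma exists_mem_Wgrade_neg_of_solvable {n : ℤ} {x : WeylAlgebra K} (hx : x ∈ Wgrade K n)
    (hsolv : Solvable K x) : ∃ y ∈ Wgrade K (-n), x * y - y * x = 1 := by
  obtain ⟨y, hy⟩ := hsolv
  refine ⟨gradedPart K (-n) y, gradedPart_mem_Wgrade _ _, ?_⟩
  have hl := gradedPart_mul_left hx (-n) y
  have hr := gradedPart_mul_right hx (-n) y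
  rw [add_neg_cancel] at hl
  rw [neg_add_cancel] at hr
  have h := congrArg (gradedPart K 0) hy
  rwa [map_sub, hl, hr, gradedPart_of_mem_Wgrade one_mem_Wgrade_zero, if_pos rfl] at h

lemma exists_eq_aeval_Wh_mul_Wq_pow {n : ℕ} {z : WeylAlgebra K} (hz : z ∈ Wgrade K n) :
    ∃ f : K[X], z = aeval (Wh K) f * Wq K ^ n := by
  refine ⟨((Wbasis K).repr z).sum fun kl c => c • ascPochhammer K kl.1, ?_⟩
  conv_lhs => rw [← (Wbasis K).linearCombination_repr z]
  rw [Finsupp.linearCombination_apply, map_finsuppSum, Finsupp.sum_mul]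
  refine Finsupp.sum_congr fun kl hkl => ?_
  have hdiag := mem_Wgrade_iff.1 hz kl (Finsupp.mem_support_iff.1 hkl)
  obtain ⟨k, l⟩ := kl
  obtain rfl : l = k + n := by simp only at hdiag; omega
  rw [map_smul, smul_mul_assoc, Wbasis_apply, Wmono_self_add]

lemma exists_eq_Wp_pow_mul_aeval_Wh {n : ℕ} {z : WeylAlgebra K} (hz : z ∈ Wgrade K (-n)) :
    ∃ g : K[X], z = Wp K ^ n * aeval (Wh K) g := by
  refine ⟨((Wbasis K).repr z).sum fun kl c => c • ascPochhammer K kl.2, ?_⟩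
  conv_lhs => rw [← (Wbasis K).linearCombination_repr z]
  rw [Finsupp.linearCombination_apply, map_finsuppSum, Finsupp.mul_sum]
  refine Finsupp.sum_congr fun kl hkl => ?_
  have hdiag := mem_Wgrade_iff.1 hz kl (Finsupp.mem_support_iff.1 hkl)
  obtain ⟨k, l⟩ := kl
  obtain rfl : k = l + n := by simp only at hdiag; omega
  rw [map_smul, mul_smul_comm, Wbasis_apply, Wmono_add_self]

lemma aeval_Wh_injective : Function.Injective (aeval (Wh K) : K[X] → WeylAlgebra K) := by
  refine (injective_iff_map_eq_zero _).2 fun u hu => eq_zero_of_infinite_isRoot _ ?_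
  refine Set.infinite_of_injective_forall_mem (f := fun m : ℕ => (m : K) + 1)
    (fun a b hab => by simpa using hab) fun m => ?_
  have h := fockRep_aeval_Wh_X_pow u m
  rw [hu, map_zero, LinearMap.zero_apply, eq_comm, smul_eq_zero] at h
  exact h.resolve_right (pow_ne_zero _ X_ne_zero)

theorem exists_eq_smul_Wq_of_solvable {n : ℕ} (hn : 0 < n) {x : WeylAlgebra K}
    (hx : x ∈ Wgrade K n) (hsolv : Solvable K x) : ∃ c : K, x = c • Wq K := by
  obtain ⟨y, hy, hxy⟩ := exists_mem_Wgrade_neg_of_solvable hx hsolv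
  obtain ⟨f, rfl⟩ := exists_eq_aeval_Wh_mul_Wq_pow hx
  obtain ⟨g, rfl⟩ := exists_eq_Wp_pow_mul_aeval_Wh hy
  rw [commutator_aeval_mul_Wq_pow_Wp_pow_mul_aeval, ← map_one (aeval (R := K) (Wh K)),
    aeval_Wh_injective.eq_iff] at hxy
  set G := f * g * (ascPochhammer K n).comp (X - C (n : K))
  have hG : G ≠ 0 := fun h0 => by simp [h0] at hxy
  have hfg : f * g ≠ 0 := left_ne_zero_of_mul hG
  have hdeg : G.natDegree = f.natDegree + g.natDegree + n := by
    rw [natDegree_mul hfg (right_ne_zero_of_mul hG), natDegree_mul (left_ne_zero_of_mul hfg)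
      (right_ne_zero_of_mul hfg), natDegree_comp, ascPochhammer_natDegree, natDegree_X_sub_C,
      mul_one]
  rw [natDegree_eq_one_of_sub_comp_X_add_C_eq_one (Nat.cast_ne_zero.2 hn.ne') hxy] at hdeg
  obtain rfl : n = 1 := by omega
  refine ⟨f.coeff 0, ?_⟩
  rw [eq_C_of_natDegree_eq_zero (by omega : f.natDegree = 0), aeval_C, pow_one, Algebra.smul_def,
    coeff_C_zero]

end WeylAlgebra

lemma vdeg_single_le {K : Type*} [Field K] (ij : ℕ × ℕ) (c : K) (ρ σ : ℕ) :
    vdeg K (Finsupp.single ij c) ρ σ ≤ ij.1 * ρ + ij.2 * σ :=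
  Finset.sup_le fun kl hkl => by rw [Finset.mem_singleton.1 (Finsupp.support_single_subset hkl)]

theorem unsolvable_of_grade_pos (i : ℤ) (hi : 0 < i)
    (x : WeylAlgebra F) (hx : x ∈ Wgrade F i)
    (α : (ℕ × ℕ) →₀ F) (hrep : Represents F α x)
    (ρ σ : ℕ) (hρ : 0 < ρ)
    (hv : ρ + σ ≤ vdeg F α ρ σ) :
    ¬ Solvable F x := by
  intro hsolv
  lift i to ℕ using hi.le
  obtain ⟨c, rfl⟩ := WeylAlgebra.exists_eq_smul_Wq_of_solvable (by exact_mod_cast hi) hx hsolv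
  rw [WeylAlgebra.represents_smul_Wq_iff.1 hrep] at hv
  have := vdeg_single_le (0, 1) c ρ σ
  simp only [zero_mul, one_mul, zero_add] at this
  omega
end

section
/- Let f(X) ∈ F[X] be a polynomial of degree greater than 1 and let x ∈ Δ2. Then f(x) ∈ Δ2 and f(x) is unsolvable. (Claim at the end of Section 3) -/
open scoped BigOperators

variable (F : Type*) [Field F] [CharZero F]

/-!
Order the PBW monomials `q^j p^i` by total degree `i + j`. The coefficient of a product at the
sum of the two "leading" indices (top degree, largest power of `q`) is the product of the leading
coefficients, so the degree is additive and the Weyl algebra is a domain, while a commutator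
`[a, b]` has degree `< deg a + deg b`.

Expanding `g(x) w` by the Hasse derivatives of `g` gives
`[g(x), w] = ∑ⱼ (ad x)ʲ([x, w]) · g⁽ʲ⁺¹⁾(x)`. When `deg x ≥ 1` and `deg g ≥ 2`, the term
`[x, w] · g'(x)` dominates (in characteristic zero `deg g' = deg g - 1`), so
`deg [g(x), w] = deg [x, w] + (deg g - 1) deg x` whenever `[x, w] ≠ 0`. Hence `g(x)` and `x` have
the same centralizer and, as `ad x` and `ad g(x)` commute, the same locally ad-nilpotent elements;
`[g(x), y] = 1` is impossible by degree; and an eigenvector of `ad g(x)` with eigenvalue `c ≠ 0`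
would be sent by `ad x` to an eigenvector of strictly smaller degree.
-/

section Commutator

open Polynomial

variable (R : Type*) {A : Type*} [CommRing R] [Ring A] [Algebra R A]

def ad (x : A) : Module.End R A := LinearMap.mulLeft R x - LinearMap.mulRight R x

variable {R}

@[simp]
lemma ad_apply (x y : A) : ad R x y = x * y - y * x := rfl

lemma iterate_commutator_eq_ad_pow (x y : A) (n : ℕ) :
    (fun z => x * z - z * x)^[n] y = (ad R x ^ n) y := by
  rw [Module.End.pow_apply]
  rfl

lemma ad_mul (x a b : A) : ad R x (a * b) = ad R x a * b + a * ad R x b := by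
  simp only [ad_apply, sub_mul, mul_sub, mul_assoc]
  abel

lemma commute_ad_mulRight {x c : A} (h : Commute x c) :
    Commute (ad R x) (LinearMap.mulRight R c) := by
  ext z
  simp [sub_mul, mul_assoc, h.eq]

lemma commute_ad_ad {x y : A} (h : Commute x y) : Commute (ad R x) (ad R y) := by
  ext z
  simp only [Module.End.mul_apply, ad_apply, mul_sub, sub_mul, ← mul_assoc, h.eq]
  simp only [mul_assoc, h.eq]
  abel

lemma commute_aeval_self (x : A) (g : R[X]) : Commute x (aeval x g) := by
  simpa using (Commute.all X g).map (aeval x)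

lemma pow_mul_eq_sum_ad_pow (x w : A) (m : ℕ) :
    x ^ m * w = ∑ k ∈ Finset.range (m + 1), (m.choose k : R) • ((ad R x ^ k) w * x ^ (m - k)) := by
  have hsplit : LinearMap.mulLeft R x = ad R x + LinearMap.mulRight R x := by
    rw [ad]; abel
  have h := congr($((commute_ad_mulRight (R := R) (Commute.refl x)).add_pow m) w)
  rw [← hsplit, LinearMap.pow_mulLeft, LinearMap.mulLeft_apply] at h
  rw [h, LinearMap.coe_sum, Finset.sum_apply]
  refine Finset.sum_congr rfl fun k _ => ?_
  rw [Module.End.mul_apply, Module.End.natCast_apply, map_nsmul, LinearMap.pow_mulRight,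
    ((commute_ad_mulRight ((Commute.refl x).pow_right (m - k))).pow_left k).eq,
    Module.End.mul_apply, LinearMap.mulRight_apply, Nat.cast_smul_eq_nsmul]

lemma aeval_hasseDeriv_eq_sum (x : A) (g : R[X]) (k : ℕ) :
    aeval x (hasseDeriv k g) = ∑ m ∈ Finset.range (g.natDegree + 1),
      ((m.choose k : R) * g.coeff m) • x ^ (m - k) := by
  rw [hasseDeriv_apply, sum_over_range _ (by simp), map_sum]
  simp [aeval_monomial, Algebra.smul_def]

lemma aeval_mul_eq_sum_ad_pow (x w : A) (g : R[X]) :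
    aeval x g * w = ∑ k ∈ Finset.range (g.natDegree + 1),
      (ad R x ^ k) w * aeval x (hasseDeriv k g) := by
  have hpow : ∀ m ∈ Finset.range (g.natDegree + 1), g.coeff m • x ^ m * w =
      ∑ k ∈ Finset.range (g.natDegree + 1),
        (ad R x ^ k) w * (((m.choose k : R) * g.coeff m) • x ^ (m - k)) := by
    intro m hm
    rw [smul_mul_assoc, pow_mul_eq_sum_ad_pow (R := R), Finset.smul_sum]
    refine (Finset.sum_subset (Finset.range_subset_range.2 (Finset.mem_range.1 hm)) ?_).trans ?_
    · intro k _ hk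
      simp [Nat.choose_eq_zero_of_lt (by simpa using hk : m < k)]
    · refine Finset.sum_congr rfl fun k _ => ?_
      rw [mul_smul_comm, smul_smul, mul_comm]
  simp_rw [aeval_hasseDeriv_eq_sum, Finset.mul_sum]
  rw [Finset.sum_comm, aeval_eq_sum_range, Finset.sum_mul]
  exact Finset.sum_congr rfl hpow

lemma ad_aeval_eq_sum (x w : A) (g : R[X]) :
    ad R (aeval x g) w = ∑ j ∈ Finset.range g.natDegree,
      (ad R x ^ j) (ad R x w) * aeval x (hasseDeriv (j + 1) g) := by
  rw [ad_apply, aeval_mul_eq_sum_ad_pow (R := R), Finset.sum_range_succ', pow_zero,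
    hasseDeriv_zero']
  simp [pow_succ]

end Commutator

lemma Module.End.pow_apply_eq_zero_of_commute {R M : Type*} [Semiring R] [AddCommMonoid M]
    [Module R M] {a b : Module.End R M} (hab : Commute a b) (hker : ∀ v, a v = 0 → b v = 0)
    (n : ℕ) {v : M} (hv : (a ^ n) v = 0) : (b ^ n) v = 0 := by
  induction n generalizing v with
  | zero => simpa using hv
  | succ n ih =>
    rw [pow_succ, Module.End.mul_apply] at hv
    rw [pow_succ', Module.End.mul_apply]
    apply hker
    rw [← Module.End.mul_apply, (hab.pow_right n).eq, Module.End.mul_apply, ih hv]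

namespace WeylAlgebra

variable {K : Type*} [Field K]

lemma Wp_mul_Wq : Wp K * Wq K = Wq K * Wp K + 1 := by
  simpa only [map_mul, map_add, map_one, Wp, Wq] using
    RingQuot.mkAlgHom_rel K (WeylRel.comm (F := K))

lemma ad_Wp_Wq_pow (n : ℕ) : ad K (Wp K) (Wq K ^ n) = n • Wq K ^ (n - 1) := by
  induction n with
  | zero => simp
  | succ n ih =>
    rw [pow_succ, ad_mul, ih, ad_apply, Wp_mul_Wq, add_sub_cancel_left, mul_one, smul_mul_assoc]
    rcases n with _ | n
    · simp
    · simp only [add_tsub_cancel_right, ← pow_succ, succ_nsmul _ (n + 1)]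

lemma ad_Wp_pow_Wq_pow (t l : ℕ) :
    (ad K (Wp K) ^ t) (Wq K ^ l) = l.descFactorial t • Wq K ^ (l - t) := by
  induction t with
  | zero => simp
  | succ t ih =>
    rw [pow_succ', Module.End.mul_apply, ih, map_nsmul, ad_Wp_Wq_pow, smul_smul,
      Nat.descFactorial_succ, Nat.sub_sub, mul_comm]

variable (K) in
noncomputable def pbw (μ : ℕ × ℕ) : WeylAlgebra K := Wq K ^ μ.1 * Wp K ^ μ.2

lemma pbw_mul_pbw (μ ν : ℕ × ℕ) :
    pbw K μ * pbw K ν = ∑ t ∈ Finset.range (μ.2 + 1),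
      (μ.2.choose t * ν.1.descFactorial t) • pbw K (μ.1 + (ν.1 - t), μ.2 - t + ν.2) := by
  have h := pow_mul_eq_sum_ad_pow (R := K) (Wp K) (Wq K ^ ν.1) μ.2
  simp only [pbw, mul_assoc, ← mul_assoc (Wp K ^ μ.2), h, Finset.mul_sum, Finset.sum_mul]
  refine Finset.sum_congr rfl fun t _ => ?_
  rw [ad_Wp_pow_Wq_pow]
  simp only [smul_mul_assoc, mul_smul_comm, Nat.cast_smul_eq_nsmul, smul_smul, pow_add, mul_assoc]

-- `p` acts as `∂/∂X₀ + X₁` and `q` as `X₀`, so that `q^j p^i` sends `1` to `X₀^j X₁^i`.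
open MvPolynomial in
noncomputable def polyRep : WeylAlgebra K →ₐ[K] Module.End K (MvPolynomial (Fin 2) K) :=
  RingQuot.liftAlgHom K ⟨FreeAlgebra.lift K
    ![(pderiv 0).toLinearMap + LinearMap.mulLeft K (X 1), LinearMap.mulLeft K (X 0)], by
    rintro _ _ ⟨⟩
    refine LinearMap.ext fun g => ?_
    simp only [map_mul, map_add, map_one, FreeAlgebra.lift_ι_apply, Module.End.mul_apply,
      Matrix.cons_val_zero, Matrix.cons_val_one, LinearMap.add_apply, LinearMap.mulLeft_apply,
      Derivation.coeFn_coe, Module.End.one_apply]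
    simp only [Derivation.leibniz, smul_eq_mul, pderiv_X, Pi.single_eq_same, mul_one]
    ring⟩

open MvPolynomial in
lemma polyRep_pbw_one (μ : ℕ × ℕ) :
    polyRep (pbw K μ) 1 = (X 0 ^ μ.1 * X 1 ^ μ.2 : MvPolynomial (Fin 2) K) := by
  have hp : polyRep (Wp K) = (pderiv 0).toLinearMap + LinearMap.mulLeft K (X 1) := by
    simp [polyRep, Wp, RingQuot.liftAlgHom_mkAlgHom_apply]
  have hq : polyRep (Wq K) = LinearMap.mulLeft K (X 0) := by
    simp [polyRep, Wq, RingQuot.liftAlgHom_mkAlgHom_apply]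
  have hpow : ∀ i, (polyRep (Wp K) ^ i) 1 = (X 1 ^ i : MvPolynomial (Fin 2) K) := by
    intro i
    induction i with
    | zero => simp
    | succ i ih =>
      rw [pow_succ', Module.End.mul_apply, ih, hp]
      simp [Derivation.leibniz_pow, pderiv_X_of_ne (show (1 : Fin 2) ≠ 0 by decide), pow_succ']
  simp [pbw, hpow, hq, LinearMap.pow_mulLeft]

lemma linearIndependent_pbw : LinearIndependent K (pbw K) := by
  set e : ℕ × ℕ → (Fin 2 →₀ ℕ) := fun μ => Finsupp.single 0 μ.1 + Finsupp.single 1 μ.2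
  have he : Function.Injective e := fun μ ν h => by
    have h0 := congrArg (· 0) h
    have h1 := congrArg (· 1) h
    simp only [e, Finsupp.coe_add, Pi.add_apply, Finsupp.single_eq_same,
      Finsupp.single_eq_of_ne zero_ne_one, Finsupp.single_eq_of_ne one_ne_zero, add_zero,
      zero_add] at h0 h1
    exact Prod.ext h0 h1
  have hcomp : (LinearMap.applyₗ 1).comp polyRep.toLinearMap ∘ pbw K =
      (fun s => MvPolynomial.monomial s (1 : K)) ∘ e := by
    ext μ : 1
    simp [e, polyRep_pbw_one, MvPolynomial.X_pow_eq_monomial, MvPolynomial.monomial_mul]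
  have hmon := (MvPolynomial.basisMonomials (Fin 2) K).linearIndependent
  rw [MvPolynomial.coe_basisMonomials] at hmon
  apply LinearIndependent.of_comp ((LinearMap.applyₗ 1).comp polyRep.toLinearMap)
  rw [hcomp]
  exact hmon.comp e he

lemma eq_top_of_Wp_mem_of_Wq_mem {S : Subalgebra K (WeylAlgebra K)} (hp : Wp K ∈ S)
    (hq : Wq K ∈ S) : S = ⊤ := by
  refine eq_top_iff.2 fun a _ => ?_
  obtain ⟨t, rfl⟩ := RingQuot.mkAlgHom_surjective K (WeylRel K) a
  induction t using FreeAlgebra.induction with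
  | grade0 r => simpa only [AlgHom.commutes] using S.algebraMap_mem r
  | grade1 i => fin_cases i <;> assumption
  | mul a b ha hb => simpa using S.mul_mem (ha trivial) (hb trivial)
  | add a b ha hb => simpa using S.add_mem (ha trivial) (hb trivial)

lemma span_range_pbw : Submodule.span K (Set.range (pbw K)) = ⊤ := by
  set S := Submodule.span K (Set.range (pbw K))
  have hpbw : ∀ μ, pbw K μ ∈ S := fun μ => Submodule.subset_span ⟨μ, rfl⟩
  have hmul : S * S ≤ S := by
    rw [Submodule.span_mul_span, Submodule.span_le]
    rintro _ ⟨_, ⟨μ, rfl⟩, _, ⟨ν, rfl⟩, rfl⟩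
    change pbw K μ * pbw K ν ∈ S
    rw [pbw_mul_pbw]
    exact Submodule.sum_mem _ fun t _ => Submodule.smul_of_tower_mem _ _ (hpbw _)
  have htop := eq_top_of_Wp_mem_of_Wq_mem (S := S.toSubalgebra (by simpa [pbw] using hpbw (0, 0))
    fun a b ha hb => hmul (Submodule.mul_mem_mul ha hb)) (by simpa [pbw] using hpbw (0, 1))
    (by simpa [pbw] using hpbw (1, 0))
  exact eq_top_iff.2 fun a _ => by simpa using htop.ge (Algebra.mem_top (x := a))

noncomputable def pbwBasis : Module.Basis (ℕ × ℕ) K (WeylAlgebra K) :=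
  .mk linearIndependent_pbw span_range_pbw.ge

lemma pbwBasis_apply (μ : ℕ × ℕ) : pbwBasis μ = pbw K μ := Module.Basis.mk_apply ..

noncomputable def degLE (d : ℕ) : Submodule K (WeylAlgebra K) :=
  (Finsupp.supported K K {μ : ℕ × ℕ | μ.1 + μ.2 ≤ d}).comap pbwBasis.repr.toLinearMap

noncomputable def deg (a : WeylAlgebra K) : ℕ :=
  (pbwBasis.repr a).support.sup fun μ => μ.1 + μ.2

lemma mem_degLE {a : WeylAlgebra K} {d : ℕ} :
    a ∈ degLE d ↔ ∀ μ ∈ (pbwBasis.repr a).support, μ.1 + μ.2 ≤ d := by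
  simp [degLE, Finsupp.mem_supported, Set.subset_def]

lemma deg_le_iff {a : WeylAlgebra K} {d : ℕ} : deg a ≤ d ↔ a ∈ degLE d := by
  rw [mem_degLE, deg, Finset.sup_le_iff]

lemma mem_degLE_deg (a : WeylAlgebra K) : a ∈ degLE (deg a) := deg_le_iff.1 le_rfl

lemma degLE_mono {d e : ℕ} (h : d ≤ e) : degLE (K := K) d ≤ degLE e :=
  fun _ ha => deg_le_iff.1 ((deg_le_iff.2 ha).trans h)

lemma le_deg {a : WeylAlgebra K} {μ : ℕ × ℕ} (hμ : μ ∈ (pbwBasis.repr a).support) :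
    μ.1 + μ.2 ≤ deg a :=
  Finset.le_sup (f := fun μ : ℕ × ℕ => μ.1 + μ.2) hμ

lemma repr_eq_zero_of_mem_degLE {a : WeylAlgebra K} {d : ℕ} {μ : ℕ × ℕ} (ha : a ∈ degLE d)
    (hμ : d < μ.1 + μ.2) : pbwBasis.repr a μ = 0 :=
  Finsupp.notMem_support_iff.1 fun h => (mem_degLE.1 ha μ h).not_gt hμ

lemma exists_mem_support_deg_eq {a : WeylAlgebra K} (ha : a ≠ 0) :
    ∃ μ ∈ (pbwBasis.repr a).support, μ.1 + μ.2 = deg a := by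
  have hne : (pbwBasis.repr a).support.Nonempty := by simpa using ha
  obtain ⟨μ, hμ, h⟩ := Finset.exists_mem_eq_sup _ hne fun μ : ℕ × ℕ => μ.1 + μ.2
  exact ⟨μ, hμ, h.symm⟩

@[simp]
lemma deg_zero : deg (0 : WeylAlgebra K) = 0 := by simp [deg]

lemma deg_pbw (μ : ℕ × ℕ) : deg (pbw K μ) = μ.1 + μ.2 := by
  simp [deg, ← pbwBasis_apply]

lemma pbw_zero : pbw K (0, 0) = 1 := by simp [pbw]

@[simp]
lemma deg_one : deg (1 : WeylAlgebra K) = 0 := by simpa [pbw_zero] using deg_pbw (K := K) (0, 0)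

lemma deg_smul {c : K} (hc : c ≠ 0) (a : WeylAlgebra K) : deg (c • a) = deg a := by
  simp [deg, Finsupp.support_smul_eq hc]

@[simp]
lemma deg_algebraMap (c : K) : deg (algebraMap K (WeylAlgebra K) c) = 0 := by
  rcases eq_or_ne c 0 with rfl | hc
  · simp
  · rw [Algebra.algebraMap_eq_smul_one, deg_smul hc, deg_one]

lemma mem_range_algebraMap_of_deg_eq_zero {a : WeylAlgebra K} (h : deg a = 0) :
    a ∈ Set.range (algebraMap K (WeylAlgebra K)) := by
  refine ⟨pbwBasis.repr a (0, 0), pbwBasis.repr.injective ?_⟩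
  rw [Algebra.algebraMap_eq_smul_one, ← pbw_zero, ← pbwBasis_apply, map_smul,
    Module.Basis.repr_self, Finsupp.smul_single_one, eq_comm, Finsupp.eq_single_iff]
  refine ⟨fun μ hμ => ?_, rfl⟩
  have := le_deg hμ
  simp only [Finset.mem_singleton]
  ext <;> omega

lemma deg_add_of_deg_lt {s t : WeylAlgebra K} (h : deg t < deg s) : deg (s + t) = deg s := by
  have hs : s ≠ 0 := by rintro rfl; simp at h
  obtain ⟨μ, hμ, hdeg⟩ := exists_mem_support_deg_eq hs
  refine le_antisymm (deg_le_iff.2 <| add_mem (mem_degLE_deg s) <| degLE_mono h.le <|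
    mem_degLE_deg t) (hdeg ▸ le_deg ?_)
  rw [Finsupp.mem_support_iff, map_add, Finsupp.add_apply,
    repr_eq_zero_of_mem_degLE (mem_degLE_deg t) (hdeg ▸ h), add_zero]
  exact Finsupp.mem_support_iff.1 hμ

lemma pbw_mul_pbw_mem_degLE (μ ν : ℕ × ℕ) :
    pbw K μ * pbw K ν ∈ degLE (μ.1 + μ.2 + (ν.1 + ν.2)) := by
  rw [pbw_mul_pbw]
  refine Submodule.sum_mem _ fun t _ => Submodule.smul_of_tower_mem _ _ (deg_le_iff.1 ?_)
  rw [deg_pbw]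
  omega

lemma repr_pbw_mul_pbw_of_le {μ ν L : ℕ × ℕ} (hL : μ.1 + μ.2 + (ν.1 + ν.2) ≤ L.1 + L.2) :
    pbwBasis.repr (pbw K μ * pbw K ν) L = if μ + ν = L then 1 else 0 := by
  rw [pbw_mul_pbw, map_sum, Finsupp.finsetSum_apply,
    Finset.sum_eq_single_of_mem 0 (by simp)]
  · simp only [Nat.choose_zero_right, Nat.descFactorial_zero, mul_one, tsub_zero, one_smul,
      ← pbwBasis_apply, Module.Basis.repr_self, Finsupp.single_apply]
    rfl
  · intro t _ ht
    rcases lt_or_ge ν.1 t with hlt | hle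
    · simp [Nat.descFactorial_eq_zero_iff_lt.2 hlt]
    · rw [map_nsmul, Finsupp.smul_apply, ← pbwBasis_apply, Module.Basis.repr_self,
        Finsupp.single_eq_of_ne, smul_zero]
      rintro rfl
      dsimp only at hL
      omega

lemma mul_eq_sum_pbw (a b : WeylAlgebra K) :
    a * b = ∑ μ ∈ (pbwBasis.repr a).support, ∑ ν ∈ (pbwBasis.repr b).support,
      (pbwBasis.repr a μ * pbwBasis.repr b ν) • (pbw K μ * pbw K ν) := by
  conv_lhs => rw [← pbwBasis.linearCombination_repr a, ← pbwBasis.linearCombination_repr b]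
  simp only [Finsupp.linearCombination_apply, Finsupp.sum, Finset.sum_mul, Finset.mul_sum,
    pbwBasis_apply, smul_mul_smul_comm]
  exact Finset.sum_comm

lemma mul_mem_degLE {a b : WeylAlgebra K} {c d : ℕ} (ha : a ∈ degLE c) (hb : b ∈ degLE d) :
    a * b ∈ degLE (c + d) := by
  rw [mul_eq_sum_pbw]
  refine Submodule.sum_mem _ fun μ hμ => Submodule.sum_mem _ fun ν hν =>
    Submodule.smul_mem _ _ (degLE_mono ?_ (pbw_mul_pbw_mem_degLE μ ν))
  have := mem_degLE.1 ha μ hμ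
  have := mem_degLE.1 hb ν hν
  omega

lemma repr_mul_of_deg_add_le {a b : WeylAlgebra K} {L : ℕ × ℕ} (hL : deg a + deg b ≤ L.1 + L.2) :
    pbwBasis.repr (a * b) L = ∑ μ ∈ (pbwBasis.repr a).support, ∑ ν ∈ (pbwBasis.repr b).support,
      if μ + ν = L then pbwBasis.repr a μ * pbwBasis.repr b ν else 0 := by
  conv_lhs => rw [mul_eq_sum_pbw]
  simp only [map_sum, map_smul, Finsupp.finsetSum_apply, Finsupp.smul_apply, smul_eq_mul]
  refine Finset.sum_congr rfl fun μ hμ => Finset.sum_congr rfl fun ν hν => ?_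
  have := le_deg hμ
  have := le_deg hν
  rw [repr_pbw_mul_pbw_of_le (by omega)]
  split_ifs <;> simp

lemma commutator_mem_degLE (a b : WeylAlgebra K) :
    a * b - b * a ∈ degLE (deg a + deg b - 1) := by
  have hle : a * b - b * a ∈ degLE (deg a + deg b) :=
    sub_mem (mul_mem_degLE (mem_degLE_deg a) (mem_degLE_deg b))
      (add_comm (deg a) (deg b) ▸ mul_mem_degLE (mem_degLE_deg b) (mem_degLE_deg a))
  refine mem_degLE.2 fun L hL => ?_
  have hL' := mem_degLE.1 hle L hL
  refine Nat.le_sub_one_of_lt (lt_of_le_of_ne hL' fun heq => Finsupp.mem_support_iff.1 hL ?_)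
  rw [map_sub, Finsupp.sub_apply, repr_mul_of_deg_add_le heq.ge, repr_mul_of_deg_add_le (by omega),
    Finset.sum_comm, sub_eq_zero]
  refine Finset.sum_congr rfl fun ν _ => Finset.sum_congr rfl fun μ _ => ?_
  rw [add_comm μ, mul_comm]

noncomputable def leadIdx (a : WeylAlgebra K) : ℕ × ℕ :=
  let m := ((pbwBasis.repr a).support.filter fun μ => μ.1 + μ.2 = deg a).sup Prod.fst
  (m, deg a - m)

lemma leadIdx_mem_support {a : WeylAlgebra K} (ha : a ≠ 0) :
    leadIdx a ∈ (pbwBasis.repr a).support ∧ (leadIdx a).1 + (leadIdx a).2 = deg a := by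
  obtain ⟨μ₀, hμ₀, hd₀⟩ := exists_mem_support_deg_eq ha
  obtain ⟨ν, hν, hsup⟩ := Finset.exists_mem_eq_sup
    ((pbwBasis.repr a).support.filter fun μ => μ.1 + μ.2 = deg a)
    ⟨μ₀, Finset.mem_filter.2 ⟨hμ₀, hd₀⟩⟩ Prod.fst
  obtain ⟨hν, hνd⟩ := Finset.mem_filter.1 hν
  have : leadIdx a = ν := by
    simp only [leadIdx, hsup]
    ext <;> omega
  exact this ▸ ⟨hν, hνd⟩

lemma fst_le_leadIdx {a : WeylAlgebra K} {μ : ℕ × ℕ} (hμ : μ ∈ (pbwBasis.repr a).support)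
    (hd : μ.1 + μ.2 = deg a) : μ.1 ≤ (leadIdx a).1 :=
  Finset.le_sup (f := Prod.fst) (Finset.mem_filter.2 ⟨hμ, hd⟩)

lemma eq_leadIdx_of_add_eq {a b : WeylAlgebra K} {μ ν : ℕ × ℕ}
    (hμ : μ ∈ (pbwBasis.repr a).support) (hν : ν ∈ (pbwBasis.repr b).support)
    (h : μ + ν = leadIdx a + leadIdx b) : μ = leadIdx a ∧ ν = leadIdx b := by
  have ha : a ≠ 0 := by rintro rfl; simp at hμ
  have hb : b ≠ 0 := by rintro rfl; simp at hν
  have hμa := le_deg hμ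
  have hνb := le_deg hν
  have hla := (leadIdx_mem_support ha).2
  have hlb := (leadIdx_mem_support hb).2
  have h1 := congrArg Prod.fst h
  have h2 := congrArg Prod.snd h
  dsimp only [Prod.fst_add, Prod.snd_add] at h1 h2
  have hμ1 := fst_le_leadIdx hμ (by omega)
  have hν1 := fst_le_leadIdx hν (by omega)
  constructor <;> ext <;> omega

lemma repr_mul_leadIdx (a b : WeylAlgebra K) :
    pbwBasis.repr (a * b) (leadIdx a + leadIdx b) =
      pbwBasis.repr a (leadIdx a) * pbwBasis.repr b (leadIdx b) := by
  rcases eq_or_ne a 0 with rfl | ha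
  · simp
  rcases eq_or_ne b 0 with rfl | hb
  · simp
  obtain ⟨hla, hda⟩ := leadIdx_mem_support ha
  obtain ⟨hlb, hdb⟩ := leadIdx_mem_support hb
  rw [repr_mul_of_deg_add_le (by dsimp only [Prod.fst_add, Prod.snd_add]; omega),
    Finset.sum_eq_single_of_mem _ hla, Finset.sum_eq_single_of_mem _ hlb, if_pos rfl]
  · exact fun ν hν hne => if_neg fun h => hne (eq_leadIdx_of_add_eq hla hν h).2
  · exact fun μ hμ hne => Finset.sum_eq_zero fun ν hν =>
      if_neg fun h => hne (eq_leadIdx_of_add_eq hμ hν h).1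

instance : NoZeroDivisors (WeylAlgebra K) where
  eq_zero_or_eq_zero_of_mul_eq_zero {a b} hab := by
    by_contra! h
    have := repr_mul_leadIdx a b
    rw [hab, map_zero, Finsupp.zero_apply, eq_comm] at this
    exact mul_ne_zero (Finsupp.mem_support_iff.1 (leadIdx_mem_support h.1).1)
      (Finsupp.mem_support_iff.1 (leadIdx_mem_support h.2).1) this

lemma deg_mul {a b : WeylAlgebra K} (ha : a ≠ 0) (hb : b ≠ 0) : deg (a * b) = deg a + deg b := by
  obtain ⟨hla, hda⟩ := leadIdx_mem_support ha
  obtain ⟨hlb, hdb⟩ := leadIdx_mem_support hb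
  refine le_antisymm (deg_le_iff.2 (mul_mem_degLE (mem_degLE_deg a) (mem_degLE_deg b))) ?_
  have hmem : leadIdx a + leadIdx b ∈ (pbwBasis.repr (a * b)).support := by
    rw [Finsupp.mem_support_iff, repr_mul_leadIdx]
    exact mul_ne_zero (Finsupp.mem_support_iff.1 hla) (Finsupp.mem_support_iff.1 hlb)
  have := le_deg hmem
  dsimp only [Prod.fst_add, Prod.snd_add] at this
  omega

lemma deg_pow (x : WeylAlgebra K) (m : ℕ) : deg (x ^ m) = m * deg x := by
  rcases eq_or_ne x 0 with rfl | hx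
  · rcases m with _ | m <;> simp
  induction m with
  | zero => simp
  | succ m ih => rw [pow_succ, deg_mul (pow_ne_zero m hx) hx, ih, add_mul, one_mul]

instance : Nontrivial (WeylAlgebra K) :=
  ⟨1, 0, fun h => by simpa [← pbw_zero, ← pbwBasis_apply] using congrArg pbwBasis.repr h⟩

lemma deg_ad_pow_le (x z : WeylAlgebra K) (k : ℕ) :
    deg ((ad K x ^ k) z) ≤ deg z + k * (deg x - 1) := by
  induction k with
  | zero => simp
  | succ k ih =>
    rw [pow_succ', Module.End.mul_apply]
    have : deg (ad K x ((ad K x ^ k) z)) ≤ deg x + deg ((ad K x ^ k) z) - 1 :=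
      deg_le_iff.2 (commutator_mem_degLE _ _)
    rw [add_mul, one_mul]
    omega

open Polynomial

lemma aeval_mem_degLE (x : WeylAlgebra K) {g : K[X]} {m : ℕ} (hg : g.natDegree ≤ m) :
    aeval x g ∈ degLE (m * deg x) := by
  rw [aeval_eq_sum_range]
  refine Submodule.sum_mem _ fun i hi => Submodule.smul_mem _ _ (deg_le_iff.1 ?_)
  rw [deg_pow]
  exact Nat.mul_le_mul_right _ ((Nat.lt_succ_iff.1 (Finset.mem_range.1 hi)).trans hg)

lemma deg_aeval {x : WeylAlgebra K} (hx : 0 < deg x) (g : K[X]) :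
    deg (aeval x g) = g.natDegree * deg x := by
  rcases eq_or_ne g.natDegree 0 with hd | hd
  · rw [hd, zero_mul, eq_C_of_natDegree_eq_zero hd, aeval_C, deg_algebraMap]
  have hg : g ≠ 0 := by rintro rfl; simp at hd
  have hlead : deg (g.leadingCoeff • x ^ g.natDegree) = g.natDegree * deg x := by
    rw [deg_smul (leadingCoeff_ne_zero.2 hg), deg_pow]
  have hsplit : aeval x g = g.leadingCoeff • x ^ g.natDegree + aeval x g.eraseLead := by
    conv_lhs => rw [← eraseLead_add_C_mul_X_pow g]
    rw [map_add, map_mul, aeval_C, map_pow, aeval_X, ← Algebra.smul_def, add_comm]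
  have hrest : deg (aeval x g.eraseLead) < deg (g.leadingCoeff • x ^ g.natDegree) := by
    rw [hlead]
    calc deg (aeval x g.eraseLead) ≤ (g.natDegree - 1) * deg x :=
          deg_le_iff.2 (aeval_mem_degLE x (eraseLead_natDegree_le g))
      _ < g.natDegree * deg x := Nat.mul_lt_mul_of_pos_right (by omega) hx
  rw [hsplit, deg_add_of_deg_lt hrest, hlead]

lemma aeval_notMem_range_algebraMap {x : WeylAlgebra K} (hx : 0 < deg x) {g : K[X]}
    (hg : 1 < g.natDegree) : aeval x g ∉ Set.range (algebraMap K (WeylAlgebra K)) := by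
  rintro ⟨c, hc⟩
  have := deg_aeval hx g
  rw [← hc, deg_algebraMap] at this
  have := Nat.mul_pos (zero_lt_one.trans hg) hx
  omega

lemma deg_pos_of_notMem_range_algebraMap {x : WeylAlgebra K}
    (hx : x ∉ Set.range (algebraMap K (WeylAlgebra K))) : 0 < deg x :=
  Nat.pos_of_ne_zero fun h => hx (mem_range_algebraMap_of_deg_eq_zero h)

variable [CharZero K]

lemma deg_ad_aeval {x w : WeylAlgebra K} (hx : 0 < deg x) {g : K[X]} (hg : 1 < g.natDegree)
    (hw : ad K x w ≠ 0) :
    deg (ad K (aeval x g) w) = deg (ad K x w) + (g.natDegree - 1) * deg x := by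
  set u := ad K x w
  have hder : deg (aeval x (derivative g)) = (g.natDegree - 1) * deg x := by
    rw [deg_aeval hx, natDegree_derivative]
  have hpos : 0 < (g.natDegree - 1) * deg x := Nat.mul_pos (by omega) hx
  have hlead : deg (u * aeval x (derivative g)) = deg u + (g.natDegree - 1) * deg x := by
    rw [deg_mul hw (fun h => by rw [h, deg_zero] at hder; omega), hder]
  -- the `j`-th term has degree at most `deg u + (deg g - 1) deg x - j`
  have hrest : deg (∑ j ∈ Finset.Ico 1 g.natDegree,
      (ad K x ^ j) u * aeval x (hasseDeriv (j + 1) g)) < deg (u * aeval x (derivative g)) := by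
    rw [hlead]
    refine lt_of_le_of_lt (b := deg u + (g.natDegree - 1) * deg x - 1)
      (deg_le_iff.2 (Submodule.sum_mem _ fun j hj => ?_)) (by omega)
    obtain ⟨hj1, hjN⟩ := Finset.mem_Ico.1 hj
    refine degLE_mono ?_ (mul_mem_degLE (deg_le_iff.1 (deg_ad_pow_le x u j))
      (aeval_mem_degLE x (natDegree_hasseDeriv_le g (j + 1))))
    obtain ⟨e, he⟩ : ∃ e, deg x = e + 1 := ⟨deg x - 1, by omega⟩
    obtain ⟨M, hM⟩ : ∃ M, g.natDegree = j + 1 + M := ⟨g.natDegree - (j + 1), by omega⟩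
    have hexp : (j + M) * (e + 1) = j * e + M * (e + 1) + j := by ring
    rw [he, hM, show j + 1 + M - 1 = j + M by omega, show j + 1 + M - (j + 1) = M by omega,
      add_tsub_cancel_right]
    omega
  rw [ad_aeval_eq_sum, Finset.range_eq_Ico, Finset.sum_eq_sum_Ico_succ_bot (by omega),
    pow_zero, Module.End.one_apply, zero_add, hasseDeriv_one', deg_add_of_deg_lt hrest, hlead]

lemma deg_ad_lt_deg_ad_aeval {x w : WeylAlgebra K} (hx : 0 < deg x) {g : K[X]}
    (hg : 1 < g.natDegree) (hw : ad K x w ≠ 0) :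
    deg (ad K x w) < deg (ad K (aeval x g) w) := by
  rw [deg_ad_aeval hx hg hw]
  have := Nat.mul_pos (Nat.sub_pos_of_lt hg) hx
  omega

lemma ad_aeval_eq_zero_iff {x w : WeylAlgebra K} (hx : 0 < deg x) {g : K[X]}
    (hg : 1 < g.natDegree) : ad K (aeval x g) w = 0 ↔ ad K x w = 0 := by
  refine ⟨fun h => by_contra fun hw => ?_, fun h => by rw [ad_aeval_eq_sum, h]; simp⟩
  simpa [h] using deg_ad_lt_deg_ad_aeval hx hg hw

lemma eq_zero_of_ad_aeval_eq_smul {x : WeylAlgebra K} (hx : 0 < deg x) {g : K[X]}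
    (hg : 1 < g.natDegree) {c : K} (hc : c ≠ 0) {w : WeylAlgebra K}
    (h : ad K (aeval x g) w = c • w) : w = 0 := by
  induction hn : deg w using Nat.strong_induction_on generalizing w with
  | _ n ih =>
  by_contra hw
  have hxw : ad K x w ≠ 0 := fun h0 => hw <|
    (smul_eq_zero.1 (h ▸ (ad_aeval_eq_zero_iff hx hg).2 h0)).resolve_left hc
  have hcomm : ad K (aeval x g) (ad K x w) = c • ad K x w := by
    rw [← Module.End.mul_apply, ← (commute_ad_ad (commute_aeval_self x g)).eq,
      Module.End.mul_apply, h, map_smul]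
  have hlt := deg_ad_lt_deg_ad_aeval hx hg hxw
  rw [h, deg_smul hc, hn] at hlt
  exact hxw (ih _ hlt hcomm rfl)

lemma cset_aeval {x : WeylAlgebra K} (hx : 0 < deg x) {g : K[X]} (hg : 1 < g.natDegree) :
    Cset K (aeval x g) = Cset K x :=
  Set.ext fun _ => ad_aeval_eq_zero_iff hx hg

lemma nset_aeval {x : WeylAlgebra K} (hx : 0 < deg x) {g : K[X]} (hg : 1 < g.natDegree) :
    Nset K (aeval x g) = Nset K x := by
  have hcomm := commute_ad_ad (R := K) (commute_aeval_self x g)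
  ext w
  simp only [Nset, Set.mem_ofPred_eq, iterate_commutator_eq_ad_pow (R := K)]
  refine exists_congr fun n => and_congr_right fun _ => ⟨?_, ?_⟩
  · exact Module.End.pow_apply_eq_zero_of_commute hcomm.symm
      (fun _ => (ad_aeval_eq_zero_iff hx hg).1) n
  · exact Module.End.pow_apply_eq_zero_of_commute hcomm
      (fun _ => (ad_aeval_eq_zero_iff hx hg).2) n

lemma dset_aeval {x : WeylAlgebra K} (hx : 0 < deg x) {g : K[X]} (hg : 1 < g.natDegree) :
    Dset K (aeval x g) = Cset K (aeval x g) := by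
  ext w
  simp only [Dset, Cset, Set.mem_ofPred_eq]
  refine ⟨fun ⟨c, hc⟩ => ?_, fun h => ⟨0, by simpa using h⟩⟩
  rcases eq_or_ne c 0 with rfl | hc0
  · simpa using hc
  · simp [eq_zero_of_ad_aeval_eq_smul hx hg hc0 hc]

lemma not_solvable_aeval {x : WeylAlgebra K} (hx : 0 < deg x) {g : K[X]}
    (hg : 1 < g.natDegree) : ¬ Solvable K (aeval x g) := by
  rintro ⟨y, hy⟩
  replace hy : ad K (aeval x g) y = 1 := hy
  have hxy : ad K x y ≠ 0 := fun h => one_ne_zero (hy ▸ (ad_aeval_eq_zero_iff hx hg).2 h)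
  simpa [hy] using deg_ad_lt_deg_ad_aeval (g := g) hx hg hxy

end WeylAlgebra

open WeylAlgebra

/-- Claim at the end of Section 3. -/
theorem aeval_mem_Delta2_and_unsolvable (f : Polynomial F) (hf : 1 < f.natDegree)
    (x : WeylAlgebra F) (hx : x ∈ Delta2 F) :
    Polynomial.aeval x f ∈ Delta2 F ∧ ¬ Solvable F (Polynomial.aeval x f) := by
  obtain ⟨hxF, hN, hNC, -⟩ := hx
  have hdeg := deg_pos_of_notMem_range_algebraMap hxF
  have hC := cset_aeval hdeg hf
  have hN' := nset_aeval hdeg hf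
  exact ⟨⟨aeval_notMem_range_algebraMap hdeg hf, hN' ▸ hN, hN' ▸ hC ▸ hNC, dset_aeval hdeg hf⟩,
    not_solvable_aeval hdeg hf⟩
end

section
/- Let x = x_k + x_{k+1} + ⋯ + x_n with x_i ∈ A_i for each i (that is, all homogeneous components of x of degree less than k vanish). If k > 1, then x is unsolvable. (Lemma 4.1) -/
open scoped BigOperators

variable (F : Type*) [Field F] [CharZero F]

/-!
Let `p` act on `F[X]` as `d/dX` and `q` as multiplication by `X`. Every element of the Weyl
algebra then acts as a finite sum of operators `X ^ m ↦ P(m) X ^ (m + s)` with polynomial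
symbols `P`, and the grading hypothesis says that the components of `x` have degrees `≥ 2`.
If `[x, y] = 1`, the components of lowest degrees `k ≥ 2` of `x` and `a` of `y` satisfy
`k + a ≤ 0`, and their commutator is a scalar. The symbol `Q` of the component of `y` vanishes
at `0, …, -a - 1`, so `deg Q ≥ 2`, and the coefficient just below the top degree of
`Q(X) P(X + a) - P(X) Q(X + k)` is `(a deg P - k deg Q) lc P lc Q ≠ 0`.
-/

open Polynomial

section Symbol

variable {R : Type*} [CommRing R]

theorem Int.cast_natCast_toNat {n : ℤ} (hn : 0 ≤ n) : ((n.toNat : ℕ) : R) = n := by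
  rw [← Int.cast_natCast, Int.toNat_of_nonneg hn]

/-- The operator `X ^ m ↦ P(m) X ^ (m + s)`; the second field makes the truncation
`(m + s).toNat` harmless. -/
structure HasSymbol (V : Module.End R R[X]) (s : ℤ) (P : R[X]) : Prop where
  apply_X_pow : ∀ m : ℕ, V (X ^ m) = P.eval (m : R) • X ^ ((m : ℤ) + s).toNat
  eval_eq_zero : ∀ m : ℕ, (m : ℤ) + s < 0 → P.eval (m : R) = 0

noncomputable def commutatorSymbol (s : ℤ) (P : R[X]) (t : ℤ) (Q : R[X]) : R[X] :=
  Q * taylor (t : R) P - P * taylor (s : R) Q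

@[simp]
theorem commutatorSymbol_zero_left (s t : ℤ) (Q : R[X]) : commutatorSymbol s 0 t Q = 0 := by
  simp [commutatorSymbol]

@[simp]
theorem commutatorSymbol_zero_right (s t : ℤ) (P : R[X]) : commutatorSymbol s P t 0 = 0 := by
  simp [commutatorSymbol]

namespace HasSymbol

variable {V W : Module.End R R[X]} {s t : ℤ} {P Q : R[X]}

theorem coeff_apply_X_pow (h : HasSymbol V s P) (m r : ℕ) :
    (V (X ^ m)).coeff r = if (r : ℤ) = m + s then P.eval (m : R) else 0 := by
  rw [h.apply_X_pow, coeff_smul, coeff_X_pow, smul_eq_mul, mul_ite, mul_one, mul_zero]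
  by_cases hms : (m : ℤ) + s < 0
  · simp [h.eval_eq_zero m hms]
  · exact if_congr (by omega) rfl rfl

theorem zero : HasSymbol (0 : Module.End R R[X]) s 0 :=
  ⟨fun _ => by simp, fun _ _ => eval_zero⟩

theorem one : HasSymbol (1 : Module.End R R[X]) 0 1 :=
  ⟨fun _ => by simp, fun m hm => by omega⟩

theorem add (hV : HasSymbol V s P) (hW : HasSymbol W s Q) : HasSymbol (V + W) s (P + Q) :=
  ⟨fun m => by simp [hV.apply_X_pow, hW.apply_X_pow, add_smul],
    fun m hm => by simp [hV.eval_eq_zero m hm, hW.eval_eq_zero m hm]⟩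

theorem sub (hV : HasSymbol V s P) (hW : HasSymbol W s Q) : HasSymbol (V - W) s (P - Q) :=
  ⟨fun m => by simp [hV.apply_X_pow, hW.apply_X_pow, sub_smul],
    fun m hm => by simp [hV.eval_eq_zero m hm, hW.eval_eq_zero m hm]⟩

theorem smul (c : R) (hV : HasSymbol V s P) : HasSymbol (c • V) s (C c * P) :=
  ⟨fun m => by simp [hV.apply_X_pow, smul_smul],
    fun m hm => by simp [hV.eval_eq_zero m hm]⟩

theorem mul (hV : HasSymbol V s P) (hW : HasSymbol W t Q) :
    HasSymbol (V * W) (s + t) (Q * taylor (t : R) P) where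
  apply_X_pow m := by
    rw [Module.End.mul_apply, hW.apply_X_pow, map_smul]
    rcases lt_or_ge ((m : ℤ) + t) 0 with hmt | hmt
    · simp [hW.eval_eq_zero m hmt]
    · rw [hV.apply_X_pow, smul_smul, eval_mul, taylor_eval, Int.cast_natCast_toNat hmt,
        Int.toNat_of_nonneg hmt, add_right_comm, add_assoc, Int.cast_add, Int.cast_natCast]
  eval_eq_zero m hm := by
    rw [eval_mul, taylor_eval]
    rcases lt_or_ge ((m : ℤ) + t) 0 with hmt | hmt
    · rw [hW.eval_eq_zero m hmt, zero_mul]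
    · have := hV.eval_eq_zero ((m : ℤ) + t).toNat (by omega)
      rw [Int.cast_natCast_toNat hmt, Int.cast_add, Int.cast_natCast] at this
      rw [this, mul_zero]

theorem commutator (hV : HasSymbol V s P) (hW : HasSymbol W t Q) :
    HasSymbol (V * W - W * V) (s + t) (commutatorSymbol s P t Q) :=
  (hV.mul hW).sub (add_comm t s ▸ hW.mul hV)

end HasSymbol

theorem coeff_sum_apply_X_pow_of_hasSymbol {ι : Type*} {J : Finset ι} {d : ι → ℤ}
    {V : ι → Module.End R R[X]} {P : ι → R[X]} (h : ∀ j ∈ J, HasSymbol (V j) (d j) (P j))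
    (m r : ℕ) :
    ((∑ j ∈ J, V j) (X ^ m)).coeff r = ∑ j ∈ J with (r : ℤ) = m + d j, (P j).eval (m : R) := by
  rw [LinearMap.sum_apply, finsetSum_coeff, Finset.sum_filter]
  exact Finset.sum_congr rfl fun j hj => (h j hj).coeff_apply_X_pow m r

theorem commutator_sum_eq {ι κ A : Type*} [Ring A] (I : Finset ι) (S : Finset κ)
    (T : ι → A) (Y : κ → A) :
    (∑ i ∈ I, T i) * (∑ s ∈ S, Y s) - (∑ s ∈ S, Y s) * (∑ i ∈ I, T i) =
      ∑ p ∈ I ×ˢ S, (T p.1 * Y p.2 - Y p.2 * T p.1) := by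
  rw [Finset.sum_sub_distrib, Finset.sum_product, Finset.sum_product, Finset.sum_mul_sum,
    Finset.sum_mul_sum, Finset.sum_comm (s := S)]

theorem coeff_commutator_sum_apply_X_pow {I S : Finset ℤ} {T Y : ℤ → Module.End R R[X]}
    {P Q : ℤ → R[X]} (hT : ∀ i ∈ I, HasSymbol (T i) i (P i))
    (hY : ∀ s ∈ S, HasSymbol (Y s) s (Q s)) (m r : ℕ) :
    (((∑ i ∈ I, T i) * (∑ s ∈ S, Y s) - (∑ s ∈ S, Y s) * (∑ i ∈ I, T i)) (X ^ m)).coeff r =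
      ∑ p ∈ I ×ˢ S with (r : ℤ) = m + (p.1 + p.2),
        (commutatorSymbol p.1 (P p.1) p.2 (Q p.2)).eval (m : R) := by
  rw [commutator_sum_eq]
  exact coeff_sum_apply_X_pow_of_hasSymbol (fun p hp =>
    (hT p.1 (Finset.mem_product.mp hp).1).commutator (hY p.2 (Finset.mem_product.mp hp).2)) m r

end Symbol

section GradedOps

variable (R : Type*) [CommRing R]

def homogeneousOps (s : ℤ) : Submodule R (Module.End R R[X]) where
  carrier := {V | ∃ P, HasSymbol V s P}
  add_mem' := fun ⟨P, hP⟩ ⟨Q, hQ⟩ => ⟨P + Q, hP.add hQ⟩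
  zero_mem' := ⟨0, .zero⟩
  smul_mem' c _ := fun ⟨P, hP⟩ => ⟨C c * P, hP.smul c⟩

theorem iSup_homogeneousOps_mul_le :
    (⨆ s, homogeneousOps R s) * (⨆ t, homogeneousOps R t) ≤ ⨆ s, homogeneousOps R s := by
  rw [Submodule.iSup_mul]
  refine iSup_le fun s => ?_
  rw [Submodule.mul_iSup]
  refine iSup_le fun t => Submodule.mul_le.mpr ?_
  rintro V ⟨P, hP⟩ W ⟨Q, hQ⟩
  exact Submodule.mem_iSup_of_mem (s + t) ⟨_, hP.mul hQ⟩

noncomputable def gradedOps : Subalgebra R (Module.End R R[X]) :=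
  (⨆ s, homogeneousOps R s).toSubalgebra (Submodule.mem_iSup_of_mem 0 ⟨1, .one⟩)
    fun _ _ hV hW => iSup_homogeneousOps_mul_le R (Submodule.mul_mem_mul hV hW)

variable {R}

theorem exists_hasSymbol_sum_of_mem_gradedOps {V : Module.End R R[X]} (hV : V ∈ gradedOps R) :
    ∃ (S : Finset ℤ) (W : ℤ → Module.End R R[X]) (P : ℤ → R[X]),
      V = ∑ s ∈ S, W s ∧ ∀ s ∈ S, HasSymbol (W s) s (P s) := by
  obtain ⟨f, hf, rfl⟩ := (Submodule.mem_iSup_iff_exists_finsupp _ V).mp hV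
  choose P hP using hf
  exact ⟨f.support, f, P, rfl, fun s _ => hP s⟩

theorem hasSymbol_derivative : HasSymbol (derivative : Module.End R R[X]) (-1) X :=
  ⟨fun m => by simp [derivative_X_pow, smul_eq_C_mul]; congr 2; omega,
    fun m hm => by simp [show m = 0 by omega]⟩

theorem hasSymbol_mulLeft_X : HasSymbol (LinearMap.mulLeft R (X : R[X])) 1 1 :=
  ⟨fun m => by simp [pow_succ'], fun m hm => by omega⟩

end GradedOps

section WeylAction

variable (R : Type*) [CommRing R]

noncomputable def weylAction : WeylAlgebra R →ₐ[R] Module.End R R[X] :=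
  RingQuot.liftAlgHom R ⟨FreeAlgebra.lift R ![derivative, LinearMap.mulLeft R X], by
    rintro _ _ ⟨⟩
    refine LinearMap.ext fun f => ?_
    simp [derivative_mul]
    ring⟩

theorem weylAction_mem_gradedOps (w : WeylAlgebra R) : weylAction R w ∈ gradedOps R := by
  obtain ⟨w, rfl⟩ := RingQuot.mkAlgHom_surjective R (WeylRel R) w
  induction w using FreeAlgebra.induction with
  | grade0 r => rw [AlgHom.commutes, AlgHom.commutes]; exact Subalgebra.algebraMap_mem _ r
  | grade1 i =>
    rw [weylAction, RingQuot.liftAlgHom_mkAlgHom_apply, FreeAlgebra.lift_ι_apply]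
    fin_cases i
    · exact Submodule.mem_iSup_of_mem (-1) ⟨X, hasSymbol_derivative⟩
    · exact Submodule.mem_iSup_of_mem 1 ⟨1, hasSymbol_mulLeft_X⟩
  | mul a b ha hb => rw [map_mul, map_mul]; exact mul_mem ha hb
  | add a b ha hb => rw [map_add, map_add]; exact add_mem ha hb

end WeylAction

section WeylGrading

variable {K : Type*} [Field K]

theorem weylAction_Wp : weylAction K (Wp K) = derivative := by
  rw [Wp, weylAction, RingQuot.liftAlgHom_mkAlgHom_apply, FreeAlgebra.lift_ι_apply]
  rfl

theorem weylAction_Wq : weylAction K (Wq K) = LinearMap.mulLeft K X := by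
  rw [Wq, weylAction, RingQuot.liftAlgHom_mkAlgHom_apply, FreeAlgebra.lift_ι_apply]
  rfl

/-- `pq` acts on `X ^ m` by `m + 1`, so `[pq, a] = i a` forces `a` to raise degrees by `i`. -/
theorem coeff_weylAction_apply_X_pow_of_mem_Wgrade [CharZero K] {i : ℤ} {a : WeylAlgebra K}
    (ha : a ∈ Wgrade K i) {m r : ℕ} (hr : (r : ℤ) ≠ m + i) :
    (weylAction K a (X ^ m)).coeff r = 0 := by
  have h := congrArg (fun E : Module.End K K[X] => (E (X ^ m)).coeff r)
    (congrArg (weylAction K) ha)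
  simp only [map_sub, map_mul, map_zsmul, weylAction_Wp, weylAction_Wq, LinearMap.sub_apply,
    Module.End.mul_apply, LinearMap.mulLeft_apply, coeff_sub] at h
  rw [← pow_succ', derivative_X_pow, ← smul_eq_C_mul, map_smul, coeff_smul, coeff_derivative,
    coeff_X_mul, Nat.add_sub_cancel, LinearMap.smul_apply, coeff_smul, zsmul_eq_mul,
    smul_eq_mul] at h
  have hne : (r - m - i : K) ≠ 0 := by exact_mod_cast (by omega : (r - m - i : ℤ) ≠ 0)
  refine (mul_eq_zero.mp ?_).resolve_left hne
  push_cast at h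
  linear_combination h

end WeylGrading

section Taylor

variable {R : Type*} [CommRing R]

theorem Polynomial.eq_of_eventually_eval_natCast_eq [IsDomain R] [CharZero R] {P Q : R[X]}
    (h : ∀ᶠ m : ℕ in Filter.atTop, P.eval (m : R) = Q.eval (m : R)) : P = Q := by
  refine eq_of_infinite_eval_eq P Q ?_
  refine ((Nat.frequently_atTop_iff_infinite.mp h.frequently).image
    Nat.cast_injective.injOn).mono ?_
  rintro _ ⟨m, hm, rfl⟩
  exact hm

theorem Polynomial.natDegree_taylor_sub_le (r : R) (f : R[X]) :
    (taylor r f - f).natDegree ≤ f.natDegree - 1 := by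
  refine (natDegree_le_iff_coeff_eq_zero (p := taylor r f - f)).mpr fun n hn => ?_
  rw [coeff_sub, sub_eq_zero]
  rcases (show f.natDegree < n ∨ n = f.natDegree by omega) with hn | rfl
  · rw [coeff_eq_zero_of_natDegree_lt hn,
      coeff_eq_zero_of_natDegree_lt (by rwa [natDegree_taylor])]
  · exact coeff_taylor_natDegree (r := r) (f := f)

theorem Polynomial.coeff_taylor_sub_natDegree_sub_one (r : R) (f : R[X]) :
    (taylor r f - f).coeff (f.natDegree - 1) = r * f.natDegree * f.leadingCoeff := by
  obtain hd | ⟨d, hd⟩ : f.natDegree = 0 ∨ ∃ d, f.natDegree = d + 1 :=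
    (Nat.eq_zero_or_eq_succ_pred _).imp id fun h => ⟨_, h⟩
  · obtain ⟨c, rfl⟩ : ∃ c, f = C c := ⟨_, eq_C_of_natDegree_eq_zero hd⟩
    simp
  have hlin : (hasseDeriv d f).natDegree ≤ 1 :=
    (natDegree_hasseDeriv_le f d).trans (by omega)
  rw [coeff_sub, taylor_coeff, hd, Nat.add_sub_cancel, eq_X_add_C_of_natDegree_le_one hlin]
  simp only [eval_add, eval_mul, eval_C, eval_X, hasseDeriv_coeff, zero_add, Nat.choose_self,
    Nat.cast_one, one_mul, add_comm 1 d, Nat.choose_succ_self_right, leadingCoeff, hd]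
  push_cast
  ring

theorem Polynomial.coeff_mul_taylor_sub (r : R) (f g : R[X]) :
    (g * (taylor r f - f)).coeff (g.natDegree + f.natDegree - 1) =
      g.leadingCoeff * (r * f.natDegree * f.leadingCoeff) := by
  rcases Nat.eq_zero_or_pos f.natDegree with hf | hf
  · obtain ⟨c, rfl⟩ : ∃ c, f = C c := ⟨_, eq_C_of_natDegree_eq_zero hf⟩
    simp
  rw [show g.natDegree + f.natDegree - 1 = g.natDegree + (f.natDegree - 1) by omega,
    coeff_mul_add_eq_of_natDegree_le le_rfl (natDegree_taylor_sub_le r f),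
    coeff_taylor_sub_natDegree_sub_one, coeff_natDegree]

/-- Comparing the coefficients just below the top degree gives `t deg P = s deg Q`. -/
theorem commutatorSymbol_ne_C [IsDomain R] [CharZero R] {P Q : R[X]} (hP : P ≠ 0)
    (hQ : 2 ≤ Q.natDegree) {s t : ℤ} (hs : 0 < s) (ht : t ≤ 0) (c : R) :
    commutatorSymbol s P t Q ≠ C c := by
  intro h
  have hcoeff : (commutatorSymbol s P t Q).coeff (Q.natDegree + P.natDegree - 1) =
      ((t * P.natDegree - s * Q.natDegree : ℤ) : R) * (P.leadingCoeff * Q.leadingCoeff) := by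
    rw [commutatorSymbol, show Q * taylor (t : R) P - P * taylor (s : R) Q =
      Q * (taylor (t : R) P - P) - P * (taylor (s : R) Q - Q) by ring, coeff_sub,
      coeff_mul_taylor_sub, add_comm Q.natDegree, coeff_mul_taylor_sub]
    push_cast
    ring
  rw [h, coeff_C, if_neg (by omega)] at hcoeff
  have hlead : P.leadingCoeff * Q.leadingCoeff ≠ 0 :=
    mul_ne_zero (leadingCoeff_ne_zero.mpr hP)
      (leadingCoeff_ne_zero.mpr (ne_zero_of_natDegree_gt hQ))
  have : t * P.natDegree - s * Q.natDegree = 0 :=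
    Int.cast_eq_zero.mp ((mul_eq_zero.mp hcoeff.symm).resolve_right hlead)
  nlinarith [Int.natCast_nonneg P.natDegree]

end Taylor

section MinimalDegree

variable {K : Type*} [Field K] [CharZero K]

theorem HasSymbol.neg_le_natDegree {V : Module.End K K[X]} {s : ℤ} {P : K[X]}
    (hV : HasSymbol V s P) (hP : P ≠ 0) : (-s).toNat ≤ P.natDegree := by
  classical
  have hZ : ((Finset.range (-s).toNat).image ((↑) : ℕ → K)).val ⊆ P.roots := by
    intro z hz
    obtain ⟨m, hm, rfl⟩ := Finset.mem_image.mp (Finset.mem_val.mp hz)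
    exact (mem_roots hP).mpr (hV.eval_eq_zero m (by simp at hm; omega))
  simpa [Finset.card_image_of_injective _ Nat.cast_injective] using
    card_le_degree_of_subset_roots hZ

theorem symbol_eq_zero_of_coeff_sum_eq_zero {I : Finset ℤ} {T : ℤ → Module.End K K[X]}
    {P : ℤ → K[X]} (hT : ∀ i ∈ I, HasSymbol (T i) i (P i)) {i : ℤ} (hi : i ∈ I)
    (h : ∀ m : ℕ, 0 ≤ (m : ℤ) + i → ((∑ j ∈ I, T j) (X ^ m)).coeff ((m : ℤ) + i).toNat = 0) :
    P i = 0 := by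
  refine eq_of_eventually_eval_natCast_eq (Filter.Eventually.of_forall fun m => ?_)
  rw [eval_zero]
  rcases lt_or_ge ((m : ℤ) + i) 0 with hmi | hmi
  · exact (hT i hi).eval_eq_zero m hmi
  · rw [← h m hmi, coeff_sum_apply_X_pow_of_hasSymbol hT, Finset.sum_eq_single_of_mem i
      (by simp [hi, Int.toNat_of_nonneg hmi])]
    intro j hj hji
    simp only [Finset.mem_filter, Int.toNat_of_nonneg hmi] at hj
    omega

theorem commutatorSymbol_eq_C_of_commutator_sum_eq_one {I S : Finset ℤ}
    {T Y : ℤ → Module.End K K[X]} {P Q : ℤ → K[X]} (hT : ∀ i ∈ I, HasSymbol (T i) i (P i))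
    (hY : ∀ s ∈ S, HasSymbol (Y s) s (Q s))
    (h : (∑ i ∈ I, T i) * (∑ s ∈ S, Y s) - (∑ s ∈ S, Y s) * (∑ i ∈ I, T i) = 1)
    {k a : ℤ} (hkI : k ∈ I) (haS : a ∈ S) (hk : ∀ i ∈ I, P i ≠ 0 → k ≤ i)
    (ha : ∀ s ∈ S, Q s ≠ 0 → a ≤ s) (hka : k + a ≤ 0) :
    commutatorSymbol k (P k) a (Q a) = C (if k + a = 0 then 1 else 0) := by
  refine eq_of_eventually_eval_natCast_eq
    (Filter.eventually_atTop.mpr ⟨(-(k + a)).toNat, fun m hm => ?_⟩)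
  have hcoeff := coeff_commutator_sum_apply_X_pow hT hY m ((m : ℤ) + (k + a)).toNat
  rw [h, Module.End.one_apply, coeff_X_pow,
    Finset.sum_eq_single_of_mem (k, a) (by simp [hkI, haS]; omega)] at hcoeff
  · rw [← hcoeff, eval_C]
    exact if_congr (by omega) rfl rfl
  · rintro ⟨i, s⟩ hp hne
    obtain ⟨his, hdeg⟩ := Finset.mem_filter.mp hp
    obtain ⟨hi, hs⟩ := Finset.mem_product.mp his
    by_cases hPi : P i = 0
    · simp [hPi]
    by_cases hQs : Q s = 0
    · simp [hQs]
    have := hk i hi hPi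
    have := ha s hs hQs
    exact absurd (Prod.ext (by omega) (by omega)) hne

theorem commutator_sum_ne_one {I S : Finset ℤ} {T Y : ℤ → Module.End K K[X]} {P Q : ℤ → K[X]}
    (hT : ∀ i ∈ I, HasSymbol (T i) i (P i)) (hY : ∀ s ∈ S, HasSymbol (Y s) s (Q s))
    (hP : ∀ i ∈ I, P i ≠ 0 → 2 ≤ i) :
    (∑ i ∈ I, T i) * (∑ s ∈ S, Y s) - (∑ s ∈ S, Y s) * (∑ i ∈ I, T i) ≠ 1 := by
  classical
  intro h
  have h₀ := coeff_commutator_sum_apply_X_pow hT hY 0 0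
  rw [h, Module.End.one_apply, coeff_X_pow, if_pos rfl] at h₀
  obtain ⟨⟨i₀, s₀⟩, hp₀, hR₀⟩ := Finset.exists_ne_zero_of_sum_ne_zero (h₀ ▸ one_ne_zero)
  obtain ⟨hp₀, hdeg₀⟩ := Finset.mem_filter.mp hp₀
  obtain ⟨hi₀, hs₀⟩ := Finset.mem_product.mp hp₀
  have hP₀ : P i₀ ≠ 0 := fun h0 => hR₀ (by simp [h0])
  have hQ₀ : Q s₀ ≠ 0 := fun h0 => hR₀ (by simp [h0])
  set k := (I.filter (P · ≠ 0)).min' ⟨i₀, by simp [hi₀, hP₀]⟩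
  set a := (S.filter (Q · ≠ 0)).min' ⟨s₀, by simp [hs₀, hQ₀]⟩
  obtain ⟨hkI, hPk⟩ : k ∈ I ∧ P k ≠ 0 := Finset.mem_filter.mp (Finset.min'_mem _ _)
  obtain ⟨haS, hQa⟩ : a ∈ S ∧ Q a ≠ 0 := Finset.mem_filter.mp (Finset.min'_mem _ _)
  have hk (i : ℤ) (hi : i ∈ I) (hPi : P i ≠ 0) : k ≤ i := Finset.min'_le _ _ (by simp [hi, hPi])
  have ha (s : ℤ) (hs : s ∈ S) (hQs : Q s ≠ 0) : a ≤ s := Finset.min'_le _ _ (by simp [hs, hQs])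
  have hka : k + a ≤ 0 := by
    have := hk i₀ hi₀ hP₀
    have := ha s₀ hs₀ hQ₀
    push_cast at hdeg₀
    omega
  have h2k := hP k hkI hPk
  have hQdeg : 2 ≤ (Q a).natDegree := by
    have := (hY a haS).neg_le_natDegree hQa
    omega
  exact commutatorSymbol_ne_C hPk hQdeg (by omega) (by omega) _
    (commutatorSymbol_eq_C_of_commutator_sum_eq_one hT hY h hkI haS hk ha hka)

end MinimalDegree

/-- Lemma 4.1. -/
theorem unsolvable_of_components_ge_two (k n : ℤ) (hk : 1 < k)
    (xc : ℤ → WeylAlgebra F) (hmem : ∀ i : ℤ, xc i ∈ Wgrade F i)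
    (x : WeylAlgebra F) (hx : x = ∑ i ∈ Finset.Icc k n, xc i) :
    ¬ Solvable F x := by
  rintro ⟨y, hy⟩
  obtain ⟨I, T, P, hxT, hT⟩ :=
    exists_hasSymbol_sum_of_mem_gradedOps (weylAction_mem_gradedOps F x)
  obtain ⟨S, Y, Q, hyY, hY⟩ :=
    exists_hasSymbol_sum_of_mem_gradedOps (weylAction_mem_gradedOps F y)
  have hlow (m r : ℕ) (hr : (r : ℤ) < m + k) : (weylAction F x (X ^ m)).coeff r = 0 := by
    rw [hx, map_sum, LinearMap.sum_apply, finsetSum_coeff]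
    exact Finset.sum_eq_zero fun i hi => coeff_weylAction_apply_X_pow_of_mem_Wgrade (hmem i)
      (by linarith [(Finset.mem_Icc.mp hi).1])
  refine commutator_sum_ne_one hT hY (fun i hi hPi => ?_) ?_
  · by_contra! hi2
    exact hPi (symbol_eq_zero_of_coeff_sum_eq_zero hT hi fun m hm => hxT ▸ hlow m _ (by omega))
  · rw [← hxT, ← hyY, ← map_mul, ← map_mul, ← map_sub, hy, map_one]
end

section
/- Let x ∈ A and let (ρ₁,σ₁), (ρ₂,σ₂) be pairs of relatively prime positive integers with ρ₁/σ₁ < ρ₂/σ₂, such that E_{ρ₁,σ₁}(x) and E_{ρ₂,σ₂}(x) are edges of x whose intersection is the singleton {(i₀,j₀)}. Then for every pair (ρ,σ) of relatively prime positive integers with ρ₁/σ₁ < ρ/σ < ρ₂/σ₂, one has E_{ρ,σ}(x) = {(i₀,j₀)}; in particular there exists such a pair (ρ,σ) for which the (ρ,σ)-term of x is α_{i₀,j₀} p^{i₀} q^{j₀}. (Lemma 5.3) -/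
open scoped BigOperators

variable (F : Type*) [Field F] [CharZero F]

private lemma key_int (ρ₁ σ₁ ρ₂ σ₂ ρ σ i j i₀ j₀ : ℤ)
    (hd1 : i * ρ₁ + j * σ₁ ≤ i₀ * ρ₁ + j₀ * σ₁)
    (hd2 : i * ρ₂ + j * σ₂ ≤ i₀ * ρ₂ + j₀ * σ₂)
    (hpos : i * ρ₁ + j * σ₁ < i₀ * ρ₁ + j₀ * σ₁ ∨ i * ρ₂ + j * σ₂ < i₀ * ρ₂ + j₀ * σ₂)
    (hD : ρ₁ * σ₂ < ρ₂ * σ₁) (hc1 : ρ₁ * σ < ρ * σ₁) (hc2 : ρ * σ₂ < ρ₂ * σ) :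
    i * ρ + j * σ < i₀ * ρ + j₀ * σ := by
  have key : (ρ₂ * σ₁ - ρ₁ * σ₂) * ((i₀ * ρ + j₀ * σ) - (i * ρ + j * σ)) =
      (ρ₂ * σ - ρ * σ₂) * ((i₀ * ρ₁ + j₀ * σ₁) - (i * ρ₁ + j * σ₁)) +
      (ρ * σ₁ - ρ₁ * σ) * ((i₀ * ρ₂ + j₀ * σ₂) - (i * ρ₂ + j * σ₂)) := by ring
  have hDpos : (0:ℤ) < ρ₂ * σ₁ - ρ₁ * σ₂ := by linarith
  have hgt : (0:ℤ) < (ρ₂ * σ₁ - ρ₁ * σ₂) * ((i₀ * ρ + j₀ * σ) - (i * ρ + j * σ)) := by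
    rw [key]
    rcases hpos with h | h
    · have t1 : (0:ℤ) < (ρ₂ * σ - ρ * σ₂) * ((i₀ * ρ₁ + j₀ * σ₁) - (i * ρ₁ + j * σ₁)) :=
        mul_pos (by linarith) (by linarith)
      have t2 : (0:ℤ) ≤ (ρ * σ₁ - ρ₁ * σ) * ((i₀ * ρ₂ + j₀ * σ₂) - (i * ρ₂ + j * σ₂)) :=
        mul_nonneg (by linarith) (by linarith)
      linarith
    · have t1 : (0:ℤ) ≤ (ρ₂ * σ - ρ * σ₂) * ((i₀ * ρ₁ + j₀ * σ₁) - (i * ρ₁ + j * σ₁)) :=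
        mul_nonneg (by linarith) (by linarith)
      have t2 : (0:ℤ) < (ρ * σ₁ - ρ₁ * σ) * ((i₀ * ρ₂ + j₀ * σ₂) - (i * ρ₂ + j * σ₂)) :=
        mul_pos (by linarith) (by linarith)
      linarith
  by_contra h
  push_neg at h
  have hle : i₀ * ρ + j₀ * σ - (i * ρ + j * σ) ≤ 0 := by linarith
  nlinarith [mul_nonpos_of_nonneg_of_nonpos hDpos.le hle]

/-- Lemma 5.3. -/
theorem Eset_eq_vertex_between_adjacent_edges (x : WeylAlgebra F) (α : (ℕ × ℕ) →₀ F)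
    (hrep : Represents F α x)
    (ρ₁ σ₁ ρ₂ σ₂ : ℕ) (hρ₁ : 0 < ρ₁) (hσ₁ : 0 < σ₁) (hρ₂ : 0 < ρ₂) (hσ₂ : 0 < σ₂)
    (hco₁ : Nat.Coprime ρ₁ σ₁) (hco₂ : Nat.Coprime ρ₂ σ₂)
    (hlt : ρ₁ * σ₂ < ρ₂ * σ₁)
    (i₀ j₀ : ℕ)
    (he₁ : 1 < (Eset F α ρ₁ σ₁).card) (he₂ : 1 < (Eset F α ρ₂ σ₂).card)
    (hinter : Eset F α ρ₁ σ₁ ∩ Eset F α ρ₂ σ₂ = {(i₀, j₀)}) :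
    (∀ ρ σ : ℕ, 0 < ρ → 0 < σ → Nat.Coprime ρ σ → ρ₁ * σ < ρ * σ₁ → ρ * σ₂ < ρ₂ * σ →
      Eset F α ρ σ = {(i₀, j₀)}) ∧
    ∃ ρ σ : ℕ, 0 < ρ ∧ 0 < σ ∧ Nat.Coprime ρ σ ∧ ρ₁ * σ < ρ * σ₁ ∧ ρ * σ₂ < ρ₂ * σ ∧
      wterm F α ρ σ = α (i₀, j₀) • Wmono F i₀ j₀ := by

  -- (i₀, j₀) lies in both edges
  have hmem : (i₀, j₀) ∈ Eset F α ρ₁ σ₁ ∩ Eset F α ρ₂ σ₂ := by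
    rw [hinter]; exact Finset.mem_singleton_self _
  obtain ⟨hm1, hm2⟩ := Finset.mem_inter.mp hmem
  rw [Eset, Finset.mem_filter] at hm1 hm2
  obtain ⟨hsupp, hv1⟩ := hm1
  obtain ⟨-, hv2⟩ := hm2
  have main : ∀ ρ σ : ℕ, 0 < ρ → 0 < σ → ρ₁ * σ < ρ * σ₁ → ρ * σ₂ < ρ₂ * σ →
      Eset F α ρ σ = {(i₀, j₀)} := by
    intro ρ σ hρ hσ hc1 hc2
    have hstrict : ∀ ij ∈ α.support, ij ≠ (i₀, j₀) →
        ij.1 * ρ + ij.2 * σ < i₀ * ρ + j₀ * σ := by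
      intro ij hij hne
      have h1 : ij.1 * ρ₁ + ij.2 * σ₁ ≤ i₀ * ρ₁ + j₀ * σ₁ := by
        rw [hv1]; exact Finset.le_sup (f := fun ij => ij.1 * ρ₁ + ij.2 * σ₁) hij
      have h2 : ij.1 * ρ₂ + ij.2 * σ₂ ≤ i₀ * ρ₂ + j₀ * σ₂ := by
        rw [hv2]; exact Finset.le_sup (f := fun ij => ij.1 * ρ₂ + ij.2 * σ₂) hij
      have hnotboth : ¬ (ij.1 * ρ₁ + ij.2 * σ₁ = i₀ * ρ₁ + j₀ * σ₁ ∧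
          ij.1 * ρ₂ + ij.2 * σ₂ = i₀ * ρ₂ + j₀ * σ₂) := by
        rintro ⟨e1, e2⟩
        apply hne
        have : ij ∈ Eset F α ρ₁ σ₁ ∩ Eset F α ρ₂ σ₂ := by
          rw [Finset.mem_inter, Eset, Eset, Finset.mem_filter, Finset.mem_filter]
          exact ⟨⟨hij, by rw [e1, hv1]⟩, ⟨hij, by rw [e2, hv2]⟩⟩
        rw [hinter, Finset.mem_singleton] at this
        exact this
      have hpos : (ij.1 : ℤ) * ρ₁ + ij.2 * σ₁ < (i₀ : ℤ) * ρ₁ + j₀ * σ₁ ∨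
          (ij.1 : ℤ) * ρ₂ + ij.2 * σ₂ < (i₀ : ℤ) * ρ₂ + j₀ * σ₂ := by
        by_cases he : ij.1 * ρ₁ + ij.2 * σ₁ = i₀ * ρ₁ + j₀ * σ₁
        · right
          have : ij.1 * ρ₂ + ij.2 * σ₂ < i₀ * ρ₂ + j₀ * σ₂ :=
            lt_of_le_of_ne h2 (fun hh => hnotboth ⟨he, hh⟩)
          exact_mod_cast this
        · left
          exact_mod_cast lt_of_le_of_ne h1 he
      have hz := key_int (ρ₁ : ℤ) σ₁ ρ₂ σ₂ ρ σ ij.1 ij.2 i₀ j₀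
        (by exact_mod_cast h1) (by exact_mod_cast h2) hpos
        (by exact_mod_cast hlt) (by exact_mod_cast hc1) (by exact_mod_cast hc2)
      exact_mod_cast hz
    have hvd : vdeg F α ρ σ = i₀ * ρ + j₀ * σ := by
      apply le_antisymm
      · apply Finset.sup_le
        intro ij hij
        by_cases hne : ij = (i₀, j₀)
        · subst hne; exact le_rfl
        · exact (hstrict ij hij hne).le
      · exact Finset.le_sup (f := fun ij => ij.1 * ρ + ij.2 * σ) hsupp
    ext ij
    rw [Eset, Finset.mem_filter, Finset.mem_singleton]
    constructor
    · rintro ⟨hij, heq⟩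
      by_contra hne
      exact absurd heq (by rw [hvd]; exact (hstrict ij hij hne).ne)
    · rintro rfl
      exact ⟨hsupp, hvd.symm⟩
  refine ⟨fun ρ σ hρ hσ _ hc1 hc2 => main ρ σ hρ hσ hc1 hc2, ?_⟩
  set g := Nat.gcd (ρ₁ + ρ₂) (σ₁ + σ₂) with hg
  have hgpos : 0 < g := Nat.gcd_pos_of_pos_left _ (by omega)
  set ρ := (ρ₁ + ρ₂) / g with hρdef
  set σ := (σ₁ + σ₂) / g with hσdef
  have hρg : ρ * g = ρ₁ + ρ₂ := Nat.div_mul_cancel (Nat.gcd_dvd_left _ _)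
  have hσg : σ * g = σ₁ + σ₂ := Nat.div_mul_cancel (Nat.gcd_dvd_right _ _)
  have hρ : 0 < ρ := by
    rcases Nat.eq_zero_or_pos ρ with h | h
    · rw [h, zero_mul] at hρg; omega
    · exact h
  have hσ : 0 < σ := by
    rcases Nat.eq_zero_or_pos σ with h | h
    · rw [h, zero_mul] at hσg; omega
    · exact h
  have hco : Nat.Coprime ρ σ := Nat.coprime_div_gcd_div_gcd hgpos
  have hc1 : ρ₁ * σ < ρ * σ₁ := by
    have : ρ₁ * σ * g < ρ * σ₁ * g := by
      calc ρ₁ * σ * g = ρ₁ * (σ * g) := by ring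
        _ = ρ₁ * (σ₁ + σ₂) := by rw [hσg]
        _ < (ρ₁ + ρ₂) * σ₁ := by nlinarith
        _ = ρ * g * σ₁ := by rw [hρg]
        _ = ρ * σ₁ * g := by ring
    exact Nat.lt_of_mul_lt_mul_right this
  have hc2 : ρ * σ₂ < ρ₂ * σ := by
    have : ρ * σ₂ * g < ρ₂ * σ * g := by
      calc ρ * σ₂ * g = ρ * g * σ₂ := by ring
        _ = (ρ₁ + ρ₂) * σ₂ := by rw [hρg]
        _ < ρ₂ * (σ₁ + σ₂) := by nlinarith
        _ = ρ₂ * (σ * g) := by rw [hσg]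
        _ = ρ₂ * σ * g := by ring
    exact Nat.lt_of_mul_lt_mul_right this
  refine ⟨ρ, σ, hρ, hσ, hco, hc1, hc2, ?_⟩
  rw [wterm, main ρ σ hρ hσ hc1 hc2, Finset.sum_singleton]
end
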